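/- arXiv:1803.02932 — 7 statements merged into one kernel-verified Lean document; each statement's English description precedes it below -/
import Mathlib

section
/- Every normalized basis that is w-almost greedy with constant K is quasi-greedy with constant K+1, i.e., ||G_m(x)|| ≤ (K+1)||x|| for all x and m. -/
open Finset Filter

section Defs

variable {X : Type*} [NormedAddCommGroup X] [NormedSpace ℝ X]

/-- `wsum w A` is the `w`-measure of the finite set `A`. -/
def wsum (w : ℕ → ℝ) (A : Finset ℕ) : ℝ := ∑ i ∈ A, w i

/-- `e` is a normalized (Schauder) basis with biorthogonal functionals `E`. -/
def NormalizedBasis (e : ℕ → X) (E : ℕ → X →L[ℝ] ℝ) : Prop :=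
  (∀ n, ‖e n‖ = 1) ∧ (∀ n m, E n (e m) = if n = m then (1:ℝ) else 0) ∧
  ∀ x : X, Filter.Tendsto (fun N => ∑ n ∈ Finset.range N, E n x • e n)
    Filter.atTop (nhds x)

/-- `Λ` is a greedy set for `x`: every coefficient inside dominates every one outside. -/
def GreedySet (E : ℕ → X →L[ℝ] ℝ) (x : X) (Λ : Finset ℕ) : Prop :=
  ∀ n ∈ Λ, ∀ k, k ∉ Λ → |E k x| ≤ |E n x|

/-- quasi-greedy with constant `K`. -/
def QuasiGreedy (e : ℕ → X) (E : ℕ → X →L[ℝ] ℝ) (K : ℝ) : Prop :=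
  ∀ (x : X) (Λ : Finset ℕ), GreedySet E x Λ → ‖∑ n ∈ Λ, E n x • e n‖ ≤ K * ‖x‖

/-- `w`-almost greedy with constant `K`. -/
def WAlmostGreedy (w : ℕ → ℝ) (e : ℕ → X) (E : ℕ → X →L[ℝ] ℝ) (K : ℝ) : Prop :=
  ∀ (x : X) (Λ : Finset ℕ), GreedySet E x Λ →
    ∀ A : Finset ℕ, wsum w A ≤ wsum w Λ →
      ‖x - ∑ n ∈ Λ, E n x • e n‖ ≤ K * ‖x - ∑ n ∈ A, E n x • e n‖

/-- `w`-democratic with constant `D`. -/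
def WDemocratic (w : ℕ → ℝ) (e : ℕ → X) (D : ℝ) : Prop :=
  ∀ A B : Finset ℕ, wsum w A ≤ wsum w B →
    ‖∑ n ∈ A, e n‖ ≤ D * ‖∑ n ∈ B, e n‖

/-- best `m`-term (weighted) approximation error. -/
noncomputable def sigmaW (w : ℕ → ℝ) (e : ℕ → X) (u : ℝ) (x : X) : ℝ :=
  sInf {r | ∃ (A : Finset ℕ) (c : ℕ → ℝ), wsum w A ≤ u ∧ r = ‖x - ∑ n ∈ A, c n • e n‖}

/-- expansional best (weighted) approximation error. -/
noncomputable def sigmaTildeW (w : ℕ → ℝ) (e : ℕ → X) (E : ℕ → X →L[ℝ] ℝ)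
    (u : ℝ) (x : X) : ℝ :=
  sInf {r | ∃ A : Finset ℕ, wsum w A ≤ u ∧ r = ‖x - ∑ n ∈ A, E n x • e n‖}

/-- weighted fundamental function `φ^w`. -/
noncomputable def phiW (w : ℕ → ℝ) (e : ℕ → X) (u : ℝ) : ℝ :=
  sSup {r | ∃ A : Finset ℕ, wsum w A ≤ u ∧ r = ‖∑ n ∈ A, e n‖}

/-- the companion function `φ̂^w`. -/
noncomputable def phiHatW (w : ℕ → ℝ) (e : ℕ → X) (v : ℝ) : ℝ :=
  sInf {r | ∃ A : Finset ℕ, v < wsum w A ∧ r = ‖∑ n ∈ A, e n‖}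

/-- `w`-semi-greedy with constant `K`: some Chebyshev approximant on each greedy set
realizes the bound. -/
def WSemiGreedy (w : ℕ → ℝ) (e : ℕ → X) (E : ℕ → X →L[ℝ] ℝ) (K : ℝ) : Prop :=
  ∀ (x : X) (Λ : Finset ℕ), GreedySet E x Λ →
    ∃ c : ℕ → ℝ, ‖x - ∑ n ∈ Λ, c n • e n‖ ≤ K * sigmaW w e (wsum w Λ) x

/-- a sequence of signs. -/
def SignVec (ε : ℕ → ℝ) : Prop := ∀ n, ε n = 1 ∨ ε n = -1

/-- `w`-superdemocratic with constant `D`. -/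
def WSuperDemocratic (w : ℕ → ℝ) (e : ℕ → X) (D : ℝ) : Prop :=
  ∀ A B : Finset ℕ, wsum w A ≤ wsum w B → ∀ ε δ : ℕ → ℝ, SignVec ε → SignVec δ →
    ‖∑ n ∈ A, ε n • e n‖ ≤ D * ‖∑ n ∈ B, δ n • e n‖

/-- `β` bounds the partial-sum projections (basis constant bound). -/
def BasisConstBound (e : ℕ → X) (E : ℕ → X →L[ℝ] ℝ) (β : ℝ) : Prop :=
  ∀ (x : X) (N : ℕ), ‖∑ n ∈ Finset.range N, E n x • e n‖ ≤ β * ‖x‖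

/-- equivalence to the unit vector basis of `c₀`. -/
def EquivC0 (e : ℕ → X) : Prop :=
  ∃ c C : ℝ, 0 < c ∧ ∀ (A : Finset ℕ) (a : ℕ → ℝ),
    (∀ n ∈ A, c * |a n| ≤ ‖∑ m ∈ A, a m • e m‖) ∧
    (∀ M : ℝ, (∀ n ∈ A, |a n| ≤ M) → ‖∑ n ∈ A, a n • e n‖ ≤ C * M)

/-- conservative with constant `C`. -/
def Conservative (e : ℕ → X) (C : ℝ) : Prop :=
  ∀ A B : Finset ℕ, A.card ≤ B.card → (∀ a ∈ A, ∀ b ∈ B, a < b) →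
    ‖∑ n ∈ A, e n‖ ≤ C * ‖∑ n ∈ B, e n‖

/-- `X` has finite cotype. -/
def FiniteCotype (X : Type*) [NormedAddCommGroup X] [NormedSpace ℝ X] : Prop :=
  ∃ (q C : ℝ), 2 ≤ q ∧ 0 < C ∧ ∀ (n : ℕ) (x : Fin n → X),
    (∑ j, ‖x j‖ ^ q) ^ (1/q) ≤
      C * ((∑ ε : Fin n → Bool,
        ‖∑ j, (if ε j then (1:ℝ) else -1) • x j‖ ^ q) / 2 ^ n) ^ (1/q)

end Defs

section

variable {X : Type*} [NormedAddCommGroup X] [NormedSpace ℝ X]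

theorem wsum_nonneg {w : ℕ → ℝ} (hw : ∀ i, 0 ≤ w i) (A : Finset ℕ) : 0 ≤ wsum w A :=
  sum_nonneg fun i _ => hw i

/-- Compare the greedy remainder with the trivial approximation by `A = ∅`. -/
theorem WAlmostGreedy.quasiGreedy {w : ℕ → ℝ} {e : ℕ → X} {E : ℕ → X →L[ℝ] ℝ} {K : ℝ}
    (hw : ∀ i, 0 ≤ w i) (h : WAlmostGreedy w e E K) : QuasiGreedy e E (K + 1) := by
  intro x Λ hΛ
  set G := ∑ n ∈ Λ, E n x • e n
  have hremainder : ‖x - G‖ ≤ K * ‖x‖ := by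
    simpa using h x Λ hΛ ∅ (by simpa [wsum] using wsum_nonneg hw Λ)
  calc ‖G‖ = ‖x - (x - G)‖ := by rw [sub_sub_cancel]
    _ ≤ ‖x‖ + ‖x - G‖ := norm_sub_le _ _
    _ ≤ (K + 1) * ‖x‖ := by linarith

end

theorem stmt0_general {X : Type*} [NormedAddCommGroup X] [NormedSpace ℝ X]
    (e : ℕ → X) (E : ℕ → X →L[ℝ] ℝ) (w : ℕ → ℝ) (K : ℝ)
    (hw : ∀ i, 0 < w i)
    (h : WAlmostGreedy w e E K) :
    QuasiGreedy e E (K + 1) :=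
  h.quasiGreedy fun i => (hw i).le

/-- every normalized `K`-`w`-almost greedy basis is `(K+1)`-quasi-greedy. -/
theorem stmt0 {X : Type*} [NormedAddCommGroup X] [NormedSpace ℝ X] [CompleteSpace X]
    (e : ℕ → X) (E : ℕ → X →L[ℝ] ℝ) (w : ℕ → ℝ) (K : ℝ)
    (hw : ∀ i, 0 < w i) (hb : NormalizedBasis e E)
    (h : WAlmostGreedy w e E K) :
    QuasiGreedy e E (K + 1) :=
  stmt0_general e E w K hw h
end

section
/- Every normalized K-w-almost greedy basis of a real Banach space is w-democratic with constant at most K: if w(A) ≤ w(B) for finite sets A, B, then ||Σ_{n∈A} e_n|| ≤ K ||Σ_{n∈B} e_n||. -/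
open Finset Filter

/-! Test the almost greedy inequality on the indicator vector `x = ∑_{n ∈ A ∪ B} e n`. All its
coefficients are `0` or `1`, so `B \ A` is a greedy set of `x`; removing the coefficients on `B \ A`
leaves `∑_{n ∈ A} e n`, removing those on `A \ B` leaves `∑_{n ∈ B} e n`, and
`w(A \ B) ≤ w(B \ A)` follows from `w(A) ≤ w(B)` by cancelling `w(A ∩ B)`. -/

lemma wsum_sdiff_le_wsum_sdiff {w : ℕ → ℝ} {A B : Finset ℕ} (h : wsum w A ≤ wsum w B) :
    wsum w (A \ B) ≤ wsum w (B \ A) := by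
  have hA := Finset.sum_inter_add_sum_sdiff A B w
  have hB := Finset.sum_inter_add_sum_sdiff B A w
  rw [Finset.inter_comm] at hB
  unfold wsum at h ⊢
  linarith

lemma union_sdiff_sdiff_eq_left {α : Type*} [DecidableEq α] (s t : Finset α) :
    (s ∪ t) \ (t \ s) = s := by
  ext a
  simp only [Finset.mem_sdiff, Finset.mem_union]
  tauto

section Indicator

variable {X : Type*} [NormedAddCommGroup X] [NormedSpace ℝ X]
  {e : ℕ → X} {E : ℕ → X →L[ℝ] ℝ}

lemma coeff_sum_basis (hbio : ∀ n m, E n (e m) = if n = m then (1 : ℝ) else 0)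
    (S : Finset ℕ) (n : ℕ) : E n (∑ m ∈ S, e m) = if n ∈ S then 1 else 0 := by
  simp only [map_sum, hbio, Finset.sum_ite_eq]

lemma greedySet_sum_basis_of_subset (hbio : ∀ n m, E n (e m) = if n = m then (1 : ℝ) else 0)
    {S Λ : Finset ℕ} (hΛ : Λ ⊆ S) : GreedySet E (∑ m ∈ S, e m) Λ := by
  intro n hn k _
  rw [coeff_sum_basis hbio, coeff_sum_basis hbio, if_pos (hΛ hn)]
  split_ifs <;> norm_num

lemma sum_basis_sub_projection (hbio : ∀ n m, E n (e m) = if n = m then (1 : ℝ) else 0)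
    {S Λ : Finset ℕ} (hΛ : Λ ⊆ S) :
    ∑ m ∈ S, e m - ∑ n ∈ Λ, E n (∑ m ∈ S, e m) • e n = ∑ n ∈ S \ Λ, e n := by
  have hproj : ∑ n ∈ Λ, E n (∑ m ∈ S, e m) • e n = ∑ n ∈ Λ, e n :=
    Finset.sum_congr rfl fun n hn => by rw [coeff_sum_basis hbio, if_pos (hΛ hn), one_smul]
  rw [hproj, ← Finset.sum_sdiff hΛ, add_sub_cancel_right]

end Indicator

theorem stmt1_general {X : Type*} [NormedAddCommGroup X] [NormedSpace ℝ X]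
    (e : ℕ → X) (E : ℕ → X →L[ℝ] ℝ) (w : ℕ → ℝ) (K : ℝ)
    (hb : NormalizedBasis e E)
    (h : WAlmostGreedy w e E K) :
    WDemocratic w e K := by
  intro A B hAB
  have hbio := hb.2.1
  have hBA_sub : B \ A ⊆ A ∪ B := Finset.sdiff_subset.trans Finset.subset_union_right
  have hAB_sub : A \ B ⊆ A ∪ B := Finset.sdiff_subset.trans Finset.subset_union_left
  have key := h (∑ m ∈ A ∪ B, e m) (B \ A) (greedySet_sum_basis_of_subset hbio hBA_sub) (A \ B)
    (wsum_sdiff_le_wsum_sdiff hAB)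
  rwa [sum_basis_sub_projection hbio hBA_sub, sum_basis_sub_projection hbio hAB_sub,
    union_sdiff_sdiff_eq_left, Finset.union_comm, union_sdiff_sdiff_eq_left] at key

/-- every normalized `K`-`w`-almost greedy basis of a real Banach space is
`w`-democratic with constant at most `K`. -/
theorem stmt1 {X : Type*} [NormedAddCommGroup X] [NormedSpace ℝ X] [CompleteSpace X]
    (e : ℕ → X) (E : ℕ → X →L[ℝ] ℝ) (w : ℕ → ℝ) (K : ℝ)
    (hw : ∀ i, 0 < w i) (hb : NormalizedBasis e E)
    (h : WAlmostGreedy w e E K) :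
    WDemocratic w e K :=
  stmt1_general e E w K hb h
end

section
/- A normalized basis of a real Banach space is w-almost greedy (for some constant) if and only if it is both quasi-greedy and w-democratic. -/
open Finset Filter

/-!
Testing `w`-almost greediness against `A = ∅` gives quasi-greediness, and testing it on
`𝟙_{A \ B} + 2 • 𝟙_B`, whose greedy set `B` competes with the lighter set `A \ B`, gives
democracy.

Conversely, put `y = x - P_A x`; then `x - P_Λ x = (y - P_{Λ \ A} y) + P_{A \ Λ} x`. The first
term is a greedy remainder of `y`. The coefficients of the second are bounded by
`t = max_{A \ Λ} |E n x|`, so by convexity of the norm and quasi-greediness its norm is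
`≲ K t ‖𝟙_{A \ Λ}‖`, and democracy replaces `𝟙_{A \ Λ}` by `𝟙_{Λ \ A}`. Since every
coefficient of `y` on its greedy set `Λ \ A` is at least `t`, the truncation inequality
`t ‖𝟙_Γ‖ ≲ K² ‖y‖` for greedy sets `Γ`, an Abel summation over greedy sums, closes the argument.
-/

section Signs

variable {X : Type*} [NormedAddCommGroup X] [NormedSpace ℝ X]

lemma exists_abs_eq_one_norm_add_smul_le (u v : X) {s t : ℝ} (hs : |s| ≤ t) :
    ∃ σ : ℝ, |σ| = 1 ∧ ‖u + s • v‖ ≤ ‖u + (t * σ) • v‖ := by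
  have hconv : ConvexOn ℝ Set.univ (fun r : ℝ => ‖u + r • v‖) :=
    (convexOn_univ_norm.translate_right u).comp_linearMap (LinearMap.toSpanSingleton ℝ X v)
  have hmem : s ∈ segment ℝ (-t) t := by
    rw [segment_eq_Icc (by linarith [abs_nonneg s])]
    exact abs_le.mp hs
  rcases le_max_iff.mp (hconv.le_max_of_mem_segment trivial trivial hmem) with h | h
  · exact ⟨-1, by norm_num, by simpa using h⟩
  · exact ⟨1, by norm_num, by simpa using h⟩

lemma exists_abs_eq_one_norm_add_sum_smul_le {ι : Type*} [DecidableEq ι] (e : ι → X) {t : ℝ}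
    (B : Finset ι) (v : X) (a : ι → ℝ) (ha : ∀ n ∈ B, |a n| ≤ t) :
    ∃ ε : ι → ℝ, (∀ n ∈ B, |ε n| = 1) ∧
      ‖v + ∑ n ∈ B, a n • e n‖ ≤ ‖v + t • ∑ n ∈ B, ε n • e n‖ := by
  induction B using Finset.induction_on generalizing v with
  | empty => exact ⟨0, by simp, by simp⟩
  | insert n₀ B hn₀ ih =>
    obtain ⟨ε, hε, hle⟩ :=
      ih (v + a n₀ • e n₀) fun n hn => ha n (Finset.mem_insert_of_mem hn)
    obtain ⟨σ, hσ, hσle⟩ := exists_abs_eq_one_norm_add_smul_le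
      (v + t • ∑ n ∈ B, ε n • e n) (e n₀) (ha n₀ (Finset.mem_insert_self n₀ B))
    have hupdate : ∀ n ∈ B, Function.update ε n₀ σ n = ε n := fun n hn =>
      Function.update_of_ne (ne_of_mem_of_not_mem hn hn₀) _ _
    have hsum : ∑ n ∈ B, Function.update ε n₀ σ n • e n = ∑ n ∈ B, ε n • e n :=
      Finset.sum_congr rfl fun n hn => by rw [hupdate n hn]
    refine ⟨Function.update ε n₀ σ, ?_, ?_⟩
    · intro n hn
      rcases Finset.mem_insert.mp hn with rfl | hn
      · simpa using hσ
      · rw [hupdate n hn]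
        exact hε n hn
    · rw [Finset.sum_insert hn₀, Finset.sum_insert hn₀, Function.update_self, hsum]
      calc ‖v + (a n₀ • e n₀ + ∑ n ∈ B, a n • e n)‖
          = ‖(v + a n₀ • e n₀) + ∑ n ∈ B, a n • e n‖ := by rw [add_assoc]
        _ ≤ ‖(v + a n₀ • e n₀) + t • ∑ n ∈ B, ε n • e n‖ := hle
        _ = ‖(v + t • ∑ n ∈ B, ε n • e n) + a n₀ • e n₀‖ := by rw [add_right_comm]
        _ ≤ ‖(v + t • ∑ n ∈ B, ε n • e n) + (t * σ) • e n₀‖ := hσle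
        _ = ‖v + t • (σ • e n₀ + ∑ n ∈ B, ε n • e n)‖ := by congr 1; module

end Signs

section Biorthogonal

variable {X : Type*} [NormedAddCommGroup X] [NormedSpace ℝ X] {e : ℕ → X}
  {E : ℕ → X →L[ℝ] ℝ}

lemma apply_sum_smul (hb : ∀ n m, E n (e m) = if n = m then (1 : ℝ) else 0) (S : Finset ℕ)
    (c : ℕ → ℝ) (k : ℕ) : E k (∑ n ∈ S, c n • e n) = if k ∈ S then c k else 0 := by
  simp [map_sum, hb]

lemma apply_sum (hb : ∀ n m, E n (e m) = if n = m then (1 : ℝ) else 0) (S : Finset ℕ)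
    (k : ℕ) : E k (∑ n ∈ S, e n) = if k ∈ S then 1 else 0 := by
  simpa using apply_sum_smul hb S (fun _ => 1) k

lemma apply_sub_sum_apply_smul (hb : ∀ n m, E n (e m) = if n = m then (1 : ℝ) else 0)
    (x : X) (A : Finset ℕ) (k : ℕ) :
    E k (x - ∑ n ∈ A, E n x • e n) = if k ∈ A then 0 else E k x := by
  rw [map_sub, apply_sum_smul hb]
  split_ifs <;> simp

lemma sum_apply_smul_sum_smul (hb : ∀ n m, E n (e m) = if n = m then (1 : ℝ) else 0)
    (T S : Finset ℕ) (c : ℕ → ℝ) :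
    ∑ n ∈ T, E n (∑ m ∈ S, c m • e m) • e n = ∑ n ∈ T ∩ S, c n • e n := by
  simp only [apply_sum_smul hb, ite_smul, zero_smul, Finset.sum_ite_mem]

lemma GreedySet.erase_of_forall_abs_le {x : X} {Γ : Finset ℕ} (hΓ : GreedySet E x Γ) {n₀ : ℕ}
    (hmin : ∀ n ∈ Γ, |E n₀ x| ≤ |E n x|) : GreedySet E x (Γ.erase n₀) := by
  intro n hn k hk
  by_cases hkn : k = n₀
  · exact hkn ▸ hmin n (Finset.mem_of_mem_erase hn)
  · exact hΓ n (Finset.mem_of_mem_erase hn) k fun hkΓ => hk (Finset.mem_erase.mpr ⟨hkn, hkΓ⟩)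

lemma GreedySet.sdiff (hb : ∀ n m, E n (e m) = if n = m then (1 : ℝ) else 0) {x : X}
    {Λ : Finset ℕ} (hΛ : GreedySet E x Λ) (A : Finset ℕ) :
    GreedySet E (x - ∑ n ∈ A, E n x • e n) (Λ \ A) := by
  intro n hn k hk
  obtain ⟨hnΛ, hnA⟩ := Finset.mem_sdiff.mp hn
  rw [apply_sub_sum_apply_smul hb, apply_sub_sum_apply_smul hb, if_neg hnA]
  split_ifs with hkA
  · simp
  · exact hΛ n hnΛ k fun hkΛ => hk (Finset.mem_sdiff.mpr ⟨hkΛ, hkA⟩)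

lemma greedySet_sum_smul_of_subset (hb : ∀ n m, E n (e m) = if n = m then (1 : ℝ) else 0)
    {B T : Finset ℕ} {δ : ℕ → ℝ} (hδ : ∀ n ∈ B, |δ n| = 1) (hT : T ⊆ B) :
    GreedySet E (∑ n ∈ B, δ n • e n) T := by
  intro n hn k _
  rw [apply_sum_smul hb, apply_sum_smul hb, if_pos (hT hn), hδ n (hT hn)]
  split_ifs with hkB
  · exact (hδ k hkB).le
  · simp

end Biorthogonal

namespace QuasiGreedy

variable {X : Type*} [NormedAddCommGroup X] [NormedSpace ℝ X] {e : ℕ → X}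
  {E : ℕ → X →L[ℝ] ℝ} {K : ℝ}

lemma mono (hq : QuasiGreedy e E K) {K' : ℝ} (hKK' : K ≤ K') : QuasiGreedy e E K' :=
  fun x Λ hΛ => (hq x Λ hΛ).trans (mul_le_mul_of_nonneg_right hKK' (norm_nonneg x))

lemma norm_sum_smul_subset_le (hq : QuasiGreedy e E K)
    (hb : ∀ n m, E n (e m) = if n = m then (1 : ℝ) else 0) {B T : Finset ℕ} {δ : ℕ → ℝ}
    (hδ : ∀ n ∈ B, |δ n| = 1) (hT : T ⊆ B) :
    ‖∑ n ∈ T, δ n • e n‖ ≤ K * ‖∑ n ∈ B, δ n • e n‖ := by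
  have h := hq _ T (greedySet_sum_smul_of_subset hb hδ hT)
  rwa [sum_apply_smul_sum_smul hb, Finset.inter_eq_left.mpr hT] at h

lemma norm_sum_smul_le_of_abs_eq_one (hq : QuasiGreedy e E K)
    (hb : ∀ n m, E n (e m) = if n = m then (1 : ℝ) else 0) {B : Finset ℕ} {ε δ : ℕ → ℝ}
    (hε : ∀ n ∈ B, |ε n| = 1) (hδ : ∀ n ∈ B, |δ n| = 1) :
    ‖∑ n ∈ B, ε n • e n‖ ≤ 2 * K * ‖∑ n ∈ B, δ n • e n‖ := by
  have hsplit : ∑ n ∈ B, ε n • e n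
      = ∑ n ∈ B with ε n = δ n, δ n • e n - ∑ n ∈ B with ¬ε n = δ n, δ n • e n := by
    rw [← Finset.sum_filter_add_sum_filter_not B (fun n => ε n = δ n), sub_eq_add_neg,
      ← Finset.sum_neg_distrib]
    congr 1
    · exact Finset.sum_congr rfl fun n hn => by rw [(Finset.mem_filter.mp hn).2]
    · refine Finset.sum_congr rfl fun n hn => ?_
      obtain ⟨hnB, hne⟩ := Finset.mem_filter.mp hn
      rw [(abs_eq_abs.mp ((hε n hnB).trans (hδ n hnB).symm)).resolve_left hne, neg_smul]
  rw [hsplit]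
  calc _ ≤ ‖∑ n ∈ B with ε n = δ n, δ n • e n‖ + ‖∑ n ∈ B with ¬ε n = δ n, δ n • e n‖ :=
        norm_sub_le _ _
    _ ≤ K * ‖∑ n ∈ B, δ n • e n‖ + K * ‖∑ n ∈ B, δ n • e n‖ :=
        add_le_add (hq.norm_sum_smul_subset_le hb hδ (Finset.filter_subset _ _))
          (hq.norm_sum_smul_subset_le hb hδ (Finset.filter_subset _ _))
    _ = 2 * K * ‖∑ n ∈ B, δ n • e n‖ := by ring

lemma norm_sum_smul_le_of_abs_le (hq : QuasiGreedy e E K)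
    (hb : ∀ n m, E n (e m) = if n = m then (1 : ℝ) else 0) {B : Finset ℕ} {a : ℕ → ℝ} {t : ℝ}
    (ht : 0 ≤ t) (ha : ∀ n ∈ B, |a n| ≤ t) :
    ‖∑ n ∈ B, a n • e n‖ ≤ 2 * K * t * ‖∑ n ∈ B, e n‖ := by
  obtain ⟨ε, hε, hle⟩ := exists_abs_eq_one_norm_add_sum_smul_le e B 0 a ha
  have hsign := hq.norm_sum_smul_le_of_abs_eq_one hb hε (δ := fun _ => 1) fun _ _ => abs_one
  simp only [one_smul] at hsign
  calc ‖∑ n ∈ B, a n • e n‖ ≤ t * ‖∑ n ∈ B, ε n • e n‖ := by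
        simpa [norm_smul, abs_of_nonneg ht] using hle
    _ ≤ t * (2 * K * ‖∑ n ∈ B, e n‖) := by gcongr
    _ = 2 * K * t * ‖∑ n ∈ B, e n‖ := by ring

/- Abel summation: removing the smallest coefficient `m = |E n₀ x|` of `Γ` moves the threshold
from `t` to `m`, at the cost of `(t⁻¹ - m⁻¹) • ∑_Γ E n x • e n`, a multiple of a greedy sum. -/
lemma norm_sum_sign_sub_le (hq : QuasiGreedy e E K) (hK : 0 ≤ K) (x : X) (Γ : Finset ℕ)
    (hΓ : GreedySet E x Γ) {t : ℝ} (ht : 0 < t) (htΓ : ∀ n ∈ Γ, t ≤ |E n x|) :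
    ‖∑ n ∈ Γ, (E n x / |E n x|) • e n - t⁻¹ • ∑ n ∈ Γ, E n x • e n‖ ≤ t⁻¹ * (K * ‖x‖) := by
  induction Γ using Finset.strongInduction generalizing t with
  | H Γ ih =>
  rcases Γ.eq_empty_or_nonempty with rfl | hne
  · simp only [Finset.sum_empty, smul_zero, sub_zero, norm_zero]
    positivity
  obtain ⟨n₀, hn₀, hmin⟩ := Γ.exists_min_image (fun n => |E n x|) hne
  have htm : t ≤ |E n₀ x| := htΓ n₀ hn₀
  have hrest := ih _ (Γ.erase_ssubset hn₀) (hΓ.erase_of_forall_abs_le hmin) (ht.trans_le htm)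
    fun n hn => hmin n (Finset.mem_of_mem_erase hn)
  have hsplit : ∑ n ∈ Γ, (E n x / |E n x|) • e n - t⁻¹ • ∑ n ∈ Γ, E n x • e n
      = (∑ n ∈ Γ.erase n₀, (E n x / |E n x|) • e n
          - |E n₀ x|⁻¹ • ∑ n ∈ Γ.erase n₀, E n x • e n)
        + (|E n₀ x|⁻¹ - t⁻¹) • ∑ n ∈ Γ, E n x • e n := by
    rw [← Finset.sum_erase_add Γ _ hn₀, ← Finset.sum_erase_add Γ (fun n => E n x • e n) hn₀]
    module
  have hcoef : ‖|E n₀ x|⁻¹ - t⁻¹‖ = t⁻¹ - |E n₀ x|⁻¹ := by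
    rw [Real.norm_eq_abs, abs_sub_comm, abs_of_nonneg (sub_nonneg.mpr (inv_anti₀ ht htm))]
  rw [hsplit]
  calc _ ≤ _ + ‖(|E n₀ x|⁻¹ - t⁻¹) • ∑ n ∈ Γ, E n x • e n‖ := norm_add_le _ _
    _ ≤ |E n₀ x|⁻¹ * (K * ‖x‖) + (t⁻¹ - |E n₀ x|⁻¹) * (K * ‖x‖) := by
        rw [norm_smul, hcoef]
        gcongr
        · exact sub_nonneg.mpr (inv_anti₀ ht htm)
        · exact hq x Γ hΓ
    _ = t⁻¹ * (K * ‖x‖) := by ring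

lemma mul_norm_sum_sign_le (hq : QuasiGreedy e E K) (hK : 0 ≤ K) {x : X} {Γ : Finset ℕ}
    (hΓ : GreedySet E x Γ) {t : ℝ} (ht : 0 < t) (htΓ : ∀ n ∈ Γ, t ≤ |E n x|) :
    t * ‖∑ n ∈ Γ, (E n x / |E n x|) • e n‖ ≤ 2 * K * ‖x‖ := by
  have hproj : ‖t⁻¹ • ∑ n ∈ Γ, E n x • e n‖ ≤ t⁻¹ * (K * ‖x‖) := by
    rw [norm_smul, Real.norm_of_nonneg (inv_nonneg.mpr ht.le)]
    gcongr
    exact hq x Γ hΓ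
  have h := (norm_le_norm_sub_add _ _).trans
    (add_le_add (hq.norm_sum_sign_sub_le hK x Γ hΓ ht htΓ) hproj)
  calc t * ‖∑ n ∈ Γ, (E n x / |E n x|) • e n‖
      ≤ t * (t⁻¹ * (K * ‖x‖) + t⁻¹ * (K * ‖x‖)) := by gcongr
    _ = 2 * K * ‖x‖ := by field_simp; ring

lemma mul_norm_sum_le_of_greedySet (hq : QuasiGreedy e E K)
    (hb : ∀ n m, E n (e m) = if n = m then (1 : ℝ) else 0) (hK : 0 ≤ K) {x : X}
    {Γ : Finset ℕ} (hΓ : GreedySet E x Γ) {t : ℝ} (ht : 0 ≤ t) (htΓ : ∀ n ∈ Γ, t ≤ |E n x|) :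
    t * ‖∑ n ∈ Γ, e n‖ ≤ 4 * K ^ 2 * ‖x‖ := by
  rcases ht.eq_or_lt with rfl | ht
  · rw [zero_mul]
    positivity
  have hsign : ∀ n ∈ Γ, abs (E n x / |E n x|) = 1 := fun n hn => by
    have : E n x ≠ 0 := abs_pos.mp (ht.trans_le (htΓ n hn))
    simp [abs_div, this]
  have h := hq.norm_sum_smul_le_of_abs_eq_one hb (ε := fun _ => 1) (fun _ _ => abs_one) hsign
  simp only [one_smul] at h
  calc t * ‖∑ n ∈ Γ, e n‖ ≤ t * (2 * K * ‖∑ n ∈ Γ, (E n x / |E n x|) • e n‖) := by gcongr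
    _ = 2 * K * (t * ‖∑ n ∈ Γ, (E n x / |E n x|) • e n‖) := by ring
    _ ≤ 2 * K * (2 * K * ‖x‖) :=
        mul_le_mul_of_nonneg_left (hq.mul_norm_sum_sign_le hK hΓ ht htΓ) (by positivity)
    _ = 4 * K ^ 2 * ‖x‖ := by ring

end QuasiGreedy

lemma WDemocratic.mono {X : Type*} [NormedAddCommGroup X] {e : ℕ → X} {w : ℕ → ℝ} {D : ℝ}
    (hd : WDemocratic w e D) {D' : ℝ} (hDD' : D ≤ D') : WDemocratic w e D' :=
  fun A B hAB => (hd A B hAB).trans (mul_le_mul_of_nonneg_right hDD' (norm_nonneg _))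

section AlmostGreedy

variable {X : Type*} [NormedAddCommGroup X] [NormedSpace ℝ X] {e : ℕ → X}
  {E : ℕ → X →L[ℝ] ℝ} {w : ℕ → ℝ} {K D : ℝ}

lemma QuasiGreedy.wAlmostGreedy (hq : QuasiGreedy e E K)
    (hb : ∀ n m, E n (e m) = if n = m then (1 : ℝ) else 0) (hK : 0 ≤ K)
    (hd : WDemocratic w e D) (hD : 0 ≤ D) : WAlmostGreedy w e E (1 + K + 8 * K ^ 3 * D) := by
  intro x Λ hΛ A hA
  set y := x - ∑ n ∈ A, E n x • e n with hy
  have hgreedy : GreedySet E y (Λ \ A) := hΛ.sdiff hb A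
  have hyx : ∀ n ∈ Λ \ A, E n y = E n x := fun n hn => by
    rw [hy, apply_sub_sum_apply_smul hb, if_neg (Finset.mem_sdiff.mp hn).2]
  have hPy : ∑ n ∈ Λ \ A, E n y • e n = ∑ n ∈ Λ \ A, E n x • e n :=
    Finset.sum_congr rfl fun n hn => by rw [hyx n hn]
  have hdecomp : x - ∑ n ∈ Λ, E n x • e n
      = (y - ∑ n ∈ Λ \ A, E n y • e n) + ∑ n ∈ A \ Λ, E n x • e n := by
    rw [hPy, hy]
    linear_combination (norm := module)
      Finset.sum_sdiff_sub_sum_sdiff (s₁ := A) (s₂ := Λ) (f := fun n => E n x • e n)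
  set t : ℝ := (((A \ Λ).sup fun n => ‖E n x‖₊ : NNReal) : ℝ) with ht
  have hsmall : ∀ n ∈ A \ Λ, |E n x| ≤ t := fun n hn => by
    rw [← Real.norm_eq_abs, ← coe_nnnorm, ht, NNReal.coe_le_coe]
    exact Finset.le_sup (f := fun n => ‖E n x‖₊) hn
  have hlarge : ∀ n ∈ Λ \ A, t ≤ |E n y| := fun n hn => by
    rw [hyx n hn, ← Real.norm_eq_abs, ← coe_nnnorm, ht, NNReal.coe_le_coe, Finset.sup_le_iff]
    intro k hk
    rw [← NNReal.coe_le_coe, coe_nnnorm, coe_nnnorm, Real.norm_eq_abs, Real.norm_eq_abs]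
    exact hΛ n (Finset.mem_sdiff.mp hn).1 k (Finset.mem_sdiff.mp hk).2
  have hw : wsum w (A \ Λ) ≤ wsum w (Λ \ A) := Finset.sum_sdiff_le_sum_sdiff.mpr hA
  have htail : ‖∑ n ∈ A \ Λ, E n x • e n‖ ≤ 8 * K ^ 3 * D * ‖y‖ :=
    calc ‖∑ n ∈ A \ Λ, E n x • e n‖ ≤ 2 * K * t * ‖∑ n ∈ A \ Λ, e n‖ :=
          hq.norm_sum_smul_le_of_abs_le hb (by positivity) hsmall
      _ ≤ 2 * K * t * (D * ‖∑ n ∈ Λ \ A, e n‖) := by gcongr; exact hd _ _ hw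
      _ = 2 * K * D * (t * ‖∑ n ∈ Λ \ A, e n‖) := by ring
      _ ≤ 2 * K * D * (4 * K ^ 2 * ‖y‖) := mul_le_mul_of_nonneg_left
          (hq.mul_norm_sum_le_of_greedySet hb hK hgreedy (by positivity) hlarge) (by positivity)
      _ = 8 * K ^ 3 * D * ‖y‖ := by ring
  rw [hdecomp]
  calc _ ≤ ‖y - ∑ n ∈ Λ \ A, E n y • e n‖ + ‖∑ n ∈ A \ Λ, E n x • e n‖ := norm_add_le _ _
    _ ≤ (‖y‖ + K * ‖y‖) + 8 * K ^ 3 * D * ‖y‖ :=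
        add_le_add ((norm_sub_le _ _).trans (add_le_add_right (hq y _ hgreedy) _)) htail
    _ = (1 + K + 8 * K ^ 3 * D) * ‖y‖ := by ring

namespace WAlmostGreedy

lemma quasiGreedy_s3 (h : WAlmostGreedy w e E K) (hw : ∀ i, 0 ≤ w i) :
    QuasiGreedy e E (1 + K) := by
  intro x Λ hΛ
  have hx := h x Λ hΛ ∅ (by rw [wsum, Finset.sum_empty]; exact Finset.sum_nonneg fun i _ => hw i)
  rw [Finset.sum_empty, sub_zero] at hx
  calc ‖∑ n ∈ Λ, E n x • e n‖ ≤ ‖x‖ + ‖x - ∑ n ∈ Λ, E n x • e n‖ :=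
        norm_le_norm_add_norm_sub _ _
    _ ≤ ‖x‖ + K * ‖x‖ := by gcongr
    _ = (1 + K) * ‖x‖ := by ring

lemma wDemocratic (h : WAlmostGreedy w e E K)
    (hb : ∀ n m, E n (e m) = if n = m then (1 : ℝ) else 0) (hw : ∀ i, 0 ≤ w i) :
    WDemocratic w e (3 * K + 1) := by
  intro A B hAB
  set u := ∑ n ∈ A \ B, e n
  set v := ∑ n ∈ B, e n
  have hcoef : ∀ k, E k (u + (2 : ℝ) • v)
      = (if k ∈ A \ B then 1 else 0) + 2 * (if k ∈ B then 1 else 0) := fun k => by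
    rw [map_add, map_smul, apply_sum hb, apply_sum hb, smul_eq_mul]
  have hcoefB : ∀ n ∈ B, E n (u + (2 : ℝ) • v) = 2 := fun n hn => by
    rw [hcoef, if_neg fun h => (Finset.mem_sdiff.mp h).2 hn, if_pos hn]
    norm_num
  have hcoefAB : ∀ n ∈ A \ B, E n (u + (2 : ℝ) • v) = 1 := fun n hn => by
    rw [hcoef, if_pos hn, if_neg (Finset.mem_sdiff.mp hn).2]
    norm_num
  have hgreedy : GreedySet E (u + (2 : ℝ) • v) B := fun n hn k _ => by
    rw [hcoefB n hn, hcoef]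
    split_ifs <;> norm_num
  have hPB : ∑ n ∈ B, E n (u + (2 : ℝ) • v) • e n = (2 : ℝ) • v :=
    (Finset.sum_congr rfl fun n hn => by rw [hcoefB n hn]).trans Finset.smul_sum.symm
  have hPAB : ∑ n ∈ A \ B, E n (u + (2 : ℝ) • v) • e n = u :=
    Finset.sum_congr rfl fun n hn => by rw [hcoefAB n hn, one_smul]
  have hsdiff : ‖u‖ ≤ 2 * K * ‖v‖ := by
    have hwAB : wsum w (A \ B) ≤ wsum w B :=
      (Finset.sum_le_sum_of_subset_of_nonneg Finset.sdiff_subset fun i _ _ => hw i).trans hAB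
    have := h _ B hgreedy (A \ B) hwAB
    rwa [hPB, hPAB, add_sub_cancel_right, add_sub_cancel_left, norm_smul, Real.norm_two,
      ← mul_assoc, mul_comm K] at this
  have hinter : ‖∑ n ∈ A ∩ B, e n‖ ≤ (1 + K) * ‖v‖ := by
    simpa using (h.quasiGreedy_s3 hw).norm_sum_smul_subset_le hb (δ := fun _ => 1)
      (fun _ _ => abs_one) Finset.inter_subset_right
  calc ‖∑ n ∈ A, e n‖ = ‖∑ n ∈ A ∩ B, e n + u‖ := by rw [Finset.sum_inter_add_sum_sdiff]
    _ ≤ ‖∑ n ∈ A ∩ B, e n‖ + ‖u‖ := norm_add_le _ _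
    _ ≤ (1 + K) * ‖v‖ + 2 * K * ‖v‖ := add_le_add hinter hsdiff
    _ = (3 * K + 1) * ‖v‖ := by ring

end WAlmostGreedy

end AlmostGreedy

theorem stmt3_general {X : Type*} [NormedAddCommGroup X] [NormedSpace ℝ X]
    (e : ℕ → X) (E : ℕ → X →L[ℝ] ℝ) (w : ℕ → ℝ)
    (hw : ∀ i, 0 < w i) (hb : NormalizedBasis e E) :
    (∃ K : ℝ, WAlmostGreedy w e E K) ↔
      (∃ K : ℝ, QuasiGreedy e E K) ∧ (∃ D : ℝ, WDemocratic w e D) := by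
  have hbi := hb.2.1
  have hw₀ : ∀ i, 0 ≤ w i := fun i => (hw i).le
  constructor
  · rintro ⟨K, h⟩
    exact ⟨⟨1 + K, h.quasiGreedy_s3 hw₀⟩, ⟨3 * K + 1, h.wDemocratic hbi hw₀⟩⟩
  · rintro ⟨⟨K, hq⟩, ⟨D, hd⟩⟩
    exact ⟨_, (hq.mono (le_max_left K 0)).wAlmostGreedy hbi (le_max_right K 0)
      (hd.mono (le_max_left D 0)) (le_max_right D 0)⟩

/-- a normalized basis of a real Banach space is `w`-almost greedy iff it is
quasi-greedy and `w`-democratic. -/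
theorem stmt3 {X : Type*} [NormedAddCommGroup X] [NormedSpace ℝ X] [CompleteSpace X]
    (e : ℕ → X) (E : ℕ → X →L[ℝ] ℝ) (w : ℕ → ℝ)
    (hw : ∀ i, 0 < w i) (hb : NormalizedBasis e E) :
    (∃ K : ℝ, WAlmostGreedy w e E K) ↔
      (∃ K : ℝ, QuasiGreedy e E K) ∧ (∃ D : ℝ, WDemocratic w e D) :=
  stmt3_general e E w hw hb
end

section
/- There exists a strictly monotone set function ν on finite subsets of ℕ with ν(∅)=0 satisfying the property (ν(A) ≤ ν(B) ⟹ ν(A\B) ≤ ν(B\A)) for which no weight sequence w of positive reals satisfies (ν(A) ≤ ν(B) ⟺ w(A) ≤ w(B)) for all finite A, B. -/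
open Finset Filter

/-! The example is a function `nuCore` on the subsets of `{1, 2, 3}` (the paper's values scaled
by `16`, so that they are integers checkable by `decide`), extended by one unit per point outside
`{1, 2, 3}`. Since the oscillation of the core is smaller than the unit, two sets are compared
first by their numbers of points outside `{1, 2, 3}`; strict monotonicity and property (*) thus
reduce to the core. No weight represents `ν`: `ν {1} = ν {3}` forces `w 1 = w 3`, hence
`w {1, 2} = w {2, 3}`, while `ν {1, 2} < ν {2, 3}`. -/

section CardExtension

variable {α R : Type*} [DecidableEq α] [CommRing R] [LinearOrder R] [IsStrictOrderedRing R]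

def cardExtension (S : Finset α) (f : Finset α → R) (M : R) (A : Finset α) : R :=
  f (A ∩ S) + M * #(A \ S)

variable {S : Finset α} {f : Finset α → R} {M : R}

@[simp] lemma cardExtension_of_subset {A : Finset α} (hA : A ⊆ S) :
    cardExtension S f M A = f A := by
  simp [cardExtension, inter_eq_left.2 hA, sdiff_eq_empty_iff_subset.2 hA]

lemma cardExtension_strictMono (hM : 0 < M)
    (hf : ∀ X ⊆ S, ∀ Y ⊆ S, X ⊂ Y → f X < f Y) : StrictMono (cardExtension S f M) := by
  intro A B hAB
  have hcard : #(A \ S) ≤ #(B \ S) := card_le_card (sdiff_subset_sdiff hAB.le le_rfl)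
  have hcardR : M * #(A \ S) ≤ M * #(B \ S) := by gcongr
  unfold cardExtension
  by_cases hS : A ∩ S = B ∩ S
  · have hlt : A \ S ⊂ B \ S := by
      refine ssubset_of_subset_of_ne (sdiff_subset_sdiff hAB.le le_rfl) fun h => hAB.ne ?_
      rw [← sdiff_union_inter A S, ← sdiff_union_inter B S, h, hS]
    have : M * #(A \ S) < M * #(B \ S) := by gcongr
    rw [hS]; linarith
  · have := hf _ inter_subset_right _ inter_subset_right
      (ssubset_of_subset_of_ne (inter_subset_inter_right hAB.le) hS)
    linarith

lemma cardExtension_sdiff_le_sdiff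
    (hf : ∀ X ⊆ S, ∀ Y ⊆ S, f X ≤ f Y → f (X \ Y) ≤ f (Y \ X))
    (hosc : ∀ X ⊆ S, ∀ Y ⊆ S, f X < f Y + M) {A B : Finset α}
    (h : cardExtension S f M A ≤ cardExtension S f M B) :
    cardExtension S f M (A \ B) ≤ cardExtension S f M (B \ A) := by
  have hXY : ∀ A B : Finset α, (A \ B) ∩ S = (A ∩ S) \ (B ∩ S) := fun A B =>
    inf_sdiff_distrib_right A B S
  have hcard : ∀ A B : Finset α, #(A \ S) = #((A \ B) \ S) + #((A ∩ B) \ S) := fun A B => by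
    rw [← card_sdiff_add_card_inter (A \ S) B, sdiff_right_comm, sdiff_inter_right_comm]
  have hM : 0 < M := by simpa using hosc ∅ (empty_subset _) ∅ (empty_subset _)
  have hAS : (A ∩ S) \ (B ∩ S) ⊆ S := sdiff_subset.trans inter_subset_right
  have hBS : (B ∩ S) \ (A ∩ S) ⊆ S := sdiff_subset.trans inter_subset_right
  unfold cardExtension at h ⊢
  rw [hXY, hXY]
  rw [hcard A B, hcard B A, inter_comm B A] at h
  set u := #((A \ B) \ S)
  set v := #((B \ A) \ S)
  push_cast at h
  rcases lt_trichotomy u v with huv | huv | huv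
  · have : M * u + M ≤ M * v := by
      rw [← mul_add_one]; gcongr; exact_mod_cast huv
    linarith [hosc _ hAS _ hBS]
  · rw [huv] at h ⊢
    have := hf (A ∩ S) inter_subset_right (B ∩ S) inter_subset_right (by linarith)
    linarith
  · have : M * v + M ≤ M * u := by
      rw [← mul_add_one]; gcongr; exact_mod_cast huv
    linarith [hosc (B ∩ S) inter_subset_right (A ∩ S) inter_subset_right]

end CardExtension

lemma not_exists_weight_of_eq_of_ne {β : Type*} [PartialOrder β] {ν : Finset ℕ → β} {a b c : ℕ}
    (hab : a ≠ b) (hbc : b ≠ c) (hac : ν {a} = ν {c}) (hne : ν {a, b} ≠ ν {b, c}) :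
    ¬ ∃ w : ℕ → ℝ, ∀ A B : Finset ℕ, (ν A ≤ ν B ↔ wsum w A ≤ wsum w B) := by
  rintro ⟨w, hw⟩
  have eq_iff : ∀ A B, ν A = ν B ↔ wsum w A = wsum w B := fun A B => by
    rw [le_antisymm_iff, le_antisymm_iff, hw, hw]
  have hwac : w a = w c := by simpa [wsum] using (eq_iff _ _).1 hac
  refine hne ((eq_iff _ _).2 ?_)
  simp only [wsum, sum_pair hab, sum_pair hbc, hwac, add_comm]

def nuCore (X : Finset ℕ) : ℤ :=
  match decide (1 ∈ X), decide (2 ∈ X), decide (3 ∈ X) with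
  | false, false, false => 0
  | true, false, false | false, true, false | false, false, true => 4
  | true, true, false => 5
  | false, true, true => 6
  | true, false, true => 7
  | true, true, true => 8

lemma nuCore_lt_of_ssubset : ∀ X ⊆ {1, 2, 3}, ∀ Y ⊆ {1, 2, 3}, X ⊂ Y → nuCore X < nuCore Y := by
  decide

lemma nuCore_sdiff_le_sdiff : ∀ X ⊆ {1, 2, 3}, ∀ Y ⊆ {1, 2, 3},
    nuCore X ≤ nuCore Y → nuCore (X \ Y) ≤ nuCore (Y \ X) := by
  decide

lemma nuCore_lt_add_sixteen : ∀ X ⊆ {1, 2, 3}, ∀ Y ⊆ {1, 2, 3}, nuCore X < nuCore Y + 16 := by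
  decide

noncomputable def nu (A : Finset ℕ) : ℝ := ((cardExtension {1, 2, 3} nuCore 16 A : ℤ) : ℝ) / 16

lemma nu_eq_comp : nu = (fun n : ℤ => (n : ℝ) / 16) ∘ cardExtension {1, 2, 3} nuCore 16 := rfl

lemma strictMono_div_sixteen : StrictMono fun n : ℤ => (n : ℝ) / 16 := fun _ _ h =>
  div_lt_div_of_pos_right (Int.cast_lt.2 h) (by norm_num)

lemma nu_strictMono : StrictMono nu :=
  nu_eq_comp ▸
    strictMono_div_sixteen.comp (cardExtension_strictMono (by norm_num) nuCore_lt_of_ssubset)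

lemma nu_sdiff_le_sdiff {A B : Finset ℕ} (h : nu A ≤ nu B) : nu (A \ B) ≤ nu (B \ A) := by
  simp only [nu_eq_comp, Function.comp_apply, strictMono_div_sixteen.le_iff_le] at h ⊢
  exact cardExtension_sdiff_le_sdiff nuCore_sdiff_le_sdiff nuCore_lt_add_sixteen h

/-- there is a strictly monotone set function `ν` with `ν ∅ = 0` having
property (*) that is not equivalent to any weight. -/
theorem stmt5 :
    ∃ ν : Finset ℕ → ℝ,
      ν ∅ = 0 ∧
      (∀ A B : Finset ℕ, A ⊂ B → ν A < ν B) ∧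
      (∀ A B : Finset ℕ, ν A ≤ ν B → ν (A \ B) ≤ ν (B \ A)) ∧
      ¬ ∃ w : ℕ → ℝ, (∀ i, 0 < w i) ∧
        ∀ A B : Finset ℕ, (ν A ≤ ν B ↔ wsum w A ≤ wsum w B) := by
  refine ⟨nu, by simp [nu, nuCore], fun A B h => nu_strictMono h, fun A B => nu_sdiff_le_sdiff, ?_⟩
  rintro ⟨w, -, hw⟩
  refine not_exists_weight_of_eq_of_ne (a := 1) (b := 2) (c := 3) (by norm_num) (by norm_num)
    ?_ ?_ ⟨w, hw⟩ <;> norm_num [nu, nuCore]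
end

section
/- Every w-almost greedy basis of a real Banach space is w-semi-greedy: there exists a constant K̄ (which can be taken as 1 + 3K + 16K³D with K the quasi-greedy and D the w-democracy constant) such that the Chebyshev greedy approximant satisfies ||x − Ḡ_m(x)|| ≤ K̄ σ^w_{w(Λ_m)}(x) for all x and m. -/
open Finset Filter

/-!
Fix a competitor `z = ∑_{n ∈ A} aₙ eₙ` with `w(A) ≤ w(Λ)`, put `y = x - z` and let `t` be the
smallest modulus of a coefficient of `x` on `Λ`. Cutting the coefficients of `y` on
`Γ = {n ∈ Λ ∪ A : |e*ₙ(y)| ≥ t}` down to modulus `t` costs at most `K‖y‖`, because the removed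
part is a convex combination of greedy projections. What separates this truncation of `y` from
`x` is a vector supported on `Λ` plus one supported on `A \ Λ` with coefficients of modulus at
most `2t`. The latter has norm at most `2K · 2t‖∑_{A \ Λ} eₙ‖ ≤ 4KD · t‖∑_{Λ \ A} eₙ‖`, and since
`Λ \ A ⊆ Γ` quasi-greediness gives `t‖∑_{Λ \ A} eₙ‖ ≤ 4K²‖y‖`. A Chebyshev approximant on `Λ`
does at least as well as that `Λ`-supported vector.
-/

section

variable {X : Type*} [NormedAddCommGroup X] [NormedSpace ℝ X]
  {e : ℕ → X} {E : ℕ → X →L[ℝ] ℝ} {K : ℝ}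

def Biorthogonal (e : ℕ → X) (E : ℕ → X →L[ℝ] ℝ) : Prop :=
  ∀ n m, E n (e m) = if n = m then (1 : ℝ) else 0

namespace Biorthogonal

theorem ne_zero (hE : Biorthogonal e E) (n : ℕ) : e n ≠ 0 := fun h => by
  simpa [h] using hE n n

theorem apply_sum (hE : Biorthogonal e E) (S : Finset ℕ) (c : ℕ → ℝ) (k : ℕ) :
    E k (∑ n ∈ S, c n • e n) = if k ∈ S then c k else 0 := by
  simp only [map_sum, map_smul, smul_eq_mul, hE k, mul_ite, mul_one, mul_zero]
  exact sum_ite_eq S k c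

theorem sum_apply_smul_of_mem_span (hE : Biorthogonal e E) {S : Finset ℕ} {v : X}
    (hv : v ∈ Submodule.span ℝ (e '' S)) : ∑ n ∈ S, E n v • e n = v := by
  induction hv using Submodule.span_induction with
  | mem _ h =>
    obtain ⟨m, hm, rfl⟩ := h
    simp [hE _ m, Finset.mem_coe.1 hm]
  | zero => simp
  | add u v _ _ hu hv => simp only [map_add, add_smul, sum_add_distrib, hu, hv]
  | smul a v _ hv => simp only [map_smul, smul_eq_mul, mul_smul, ← smul_sum, hv]

theorem exists_forall_norm_sub_sum_le (hE : Biorthogonal e E) (x : X) (S : Finset ℕ) :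
    ∃ c : ℕ → ℝ, ∀ d : ℕ → ℝ, ‖x - ∑ n ∈ S, c n • e n‖ ≤ ‖x - ∑ n ∈ S, d n • e n‖ := by
  let V := Submodule.span ℝ (e '' S)
  have : FiniteDimensional ℝ V := FiniteDimensional.span_of_finite ℝ (S.finite_toSet.image e)
  have hcoercive : Tendsto (fun v : V => ‖x - v‖) (cocompact V) atTop :=
    tendsto_atTop_mono (fun v => by simpa [norm_sub_rev] using norm_sub_norm_le (v : X) x)
      (tendsto_atTop_add_const_right _ (-‖x‖) tendsto_norm_cocompact_atTop)
  obtain ⟨v₀, hv₀⟩ := (by fun_prop : Continuous fun v : V => ‖x - v‖).exists_forall_le hcoercive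
  refine ⟨fun n => E n v₀, fun d => ?_⟩
  rw [hE.sum_apply_smul_of_mem_span v₀.2]
  exact hv₀ ⟨_, Submodule.sum_mem _ fun n hn =>
    Submodule.smul_mem _ _ (Submodule.subset_span (Set.mem_image_of_mem e hn))⟩

end Biorthogonal

theorem Real.abs_mul_sign (r : ℝ) : |r| * Real.sign r = r := by
  rcases lt_trichotomy r 0 with h | rfl | h
  · simp [abs_of_neg h, Real.sign_of_neg h]
  · simp
  · simp [abs_of_pos h, Real.sign_of_pos h]

theorem Real.abs_sign_of_ne_zero {r : ℝ} (h : r ≠ 0) : |Real.sign r| = 1 := by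
  rcases Real.sign_apply_eq_of_ne_zero r h with h | h <;> simp [h]

theorem Real.abs_sign_le_one (r : ℝ) : |Real.sign r| ≤ 1 := by
  rcases Real.sign_apply_eq r with h | h | h <;> simp [h]

theorem GreedySet.erase_of_forall_le {y : X} {Γ : Finset ℕ} {r : ℕ} (hΓ : GreedySet E y Γ)
    (hr : ∀ n ∈ Γ, |E r y| ≤ |E n y|) : GreedySet E y (Γ.erase r) := by
  intro n hn k hk
  by_cases hkr : k = r
  · exact hkr ▸ hr n (mem_of_mem_erase hn)
  · exact hΓ n (mem_of_mem_erase hn) k fun h => hk (mem_erase.2 ⟨hkr, h⟩)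

theorem GreedySet.exists_threshold {x : X} {Λ : Finset ℕ} (hΛ : GreedySet E x Λ)
    (hne : Λ.Nonempty) :
    ∃ t, 0 ≤ t ∧ (∀ n ∈ Λ, t ≤ |E n x|) ∧ ∀ k ∉ Λ, |E k x| ≤ t := by
  obtain ⟨n₀, hn₀, hmin⟩ := Λ.exists_min_image (fun n => |E n x|) hne
  exact ⟨|E n₀ x|, abs_nonneg _, hmin, fun k hk => hΛ n₀ hn₀ k hk⟩

theorem GreedySet.filter_union {x y : X} {Λ A : Finset ℕ} {t : ℝ}
    (hout : ∀ k ∉ Λ, |E k x| ≤ t) (hyx : ∀ k ∉ A, E k y = E k x) :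
    GreedySet E y ((Λ ∪ A).filter fun n => t ≤ |E n y|) := by
  intro n hn k hk
  have hnt := (mem_filter.1 hn).2
  by_cases hkU : k ∈ Λ ∪ A
  · exact (not_le.1 fun h => hk (mem_filter.2 ⟨hkU, h⟩)).le.trans hnt
  · rw [hyx k fun h => hkU (mem_union_right _ h)]
    exact (hout k fun h => hkU (mem_union_left _ h)).trans hnt

namespace QuasiGreedy

theorem nonneg (hK : QuasiGreedy e E K) (hE : Biorthogonal e E) : 0 ≤ K := by
  have h := hK (e 0) ∅ (by simp [GreedySet])
  rw [sum_empty, norm_zero] at h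
  exact nonneg_of_mul_nonneg_left h (norm_pos_iff.2 (hE.ne_zero 0))

theorem norm_sum_le_of_abs_eq_one (hK : QuasiGreedy e E K) (hE : Biorthogonal e E)
    {S Γ : Finset ℕ} (hS : S ⊆ Γ) {s : ℕ → ℝ} (hs : ∀ n ∈ Γ, |s n| = 1) :
    ‖∑ n ∈ S, s n • e n‖ ≤ K * ‖∑ n ∈ Γ, s n • e n‖ := by
  have hcoeff := hE.apply_sum Γ s
  have hgreedy : GreedySet E (∑ n ∈ Γ, s n • e n) S := by
    intro n hn k _
    rw [hcoeff, hcoeff, if_pos (hS hn), hs n (hS hn)]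
    split_ifs with hk
    · exact (hs k hk).le
    · simp
  convert hK _ S hgreedy using 2
  exact sum_congr rfl fun n hn => by rw [hcoeff, if_pos (hS hn)]

theorem norm_sum_mul_smul_le (hK : QuasiGreedy e E K) (hE : Biorthogonal e E)
    {S Γ : Finset ℕ} (hS : S ⊆ Γ) {r s : ℕ → ℝ} (hr : ∀ n ∈ S, |r n| = 1)
    (hs : ∀ n ∈ Γ, |s n| = 1) :
    ‖∑ n ∈ S, (r n * s n) • e n‖ ≤ 2 * K * ‖∑ n ∈ Γ, s n • e n‖ := by
  have hsplit : ∑ n ∈ S, (r n * s n) • e n =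
      ∑ n ∈ S.filter (r · = 1), s n • e n - ∑ n ∈ S.filter (r · ≠ 1), s n • e n := by
    rw [sum_filter, sum_filter, ← sum_sub_distrib]
    refine sum_congr rfl fun n hn => ?_
    rcases (abs_eq zero_le_one).1 (hr n hn) with h | h <;> norm_num [h]
  have hproj (p : ℕ → Prop) [DecidablePred p] :=
    hK.norm_sum_le_of_abs_eq_one hE ((filter_subset p S).trans hS) hs
  rw [hsplit]
  linarith [norm_sub_le (∑ n ∈ S.filter (r · = 1), s n • e n)
    (∑ n ∈ S.filter (r · ≠ 1), s n • e n), hproj (r · = 1), hproj (r · ≠ 1)]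

end QuasiGreedy

theorem exists_abs_eq_one_norm_sum_le (e : ℕ → X) {B : Finset ℕ} {b : ℕ → ℝ} {M : ℝ}
    (hM : 0 ≤ M) (hb : ∀ n ∈ B, |b n| ≤ M) :
    ∃ r : ℕ → ℝ, (∀ n ∈ B, |r n| = 1) ∧ ‖∑ n ∈ B, b n • e n‖ ≤ M * ‖∑ n ∈ B, r n • e n‖ := by
  rcases hM.eq_or_lt with rfl | hM
  · refine ⟨1, by simp, ?_⟩
    rw [sum_eq_zero fun n hn => by rw [abs_nonpos_iff.1 (hb n hn), zero_smul]]
    simp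
  let L : (B → ℝ) →ₗ[ℝ] X := ∑ i : B, (LinearMap.proj i).smulRight (e i)
  have hL (c : B → ℝ) : L c = ∑ i : B, c i • e i := by simp [L]
  -- `‖L ·‖` is convex, so on the cube `[-1, 1]^B` it is maximal at a vertex
  have hcube : (fun i : B => b i / M) ∈ convexHull ℝ (Set.univ.pi fun _ => {-1, 1}) := by
    rw [convexHull_pi]
    intro i _
    rw [convexHull_pair, segment_eq_Icc (by norm_num)]
    exact abs_le.1 (by rw [abs_div, abs_of_pos hM, div_le_one hM]; exact hb i i.2)
  obtain ⟨r, hr, hle⟩ :=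
    (convexOn_univ_norm.comp_linearMap L).exists_ge_of_mem_convexHull (fun _ _ => trivial) hcube
  refine ⟨fun n => if h : n ∈ B then r ⟨n, h⟩ else 1, fun n hn => ?_, ?_⟩
  · rcases hr ⟨n, hn⟩ trivial with h | h <;> simp_all
  have hbM : ∑ n ∈ B, b n • e n = M • L fun i => b i / M := by
    rw [hL, smul_sum, ← sum_coe_sort B]
    exact sum_congr rfl fun i _ => by rw [smul_smul, mul_div_cancel₀ _ hM.ne']
  have hr' : ∑ n ∈ B, (if h : n ∈ B then r ⟨n, h⟩ else 1) • e n = L r := by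
    rw [hL, ← sum_coe_sort B]
    exact sum_congr rfl fun i _ => by rw [dif_pos i.2]
  rw [hbM, hr', norm_smul, Real.norm_of_nonneg hM.le]
  exact mul_le_mul_of_nonneg_left hle hM.le

theorem QuasiGreedy.norm_sum_smul_le_of_abs_le_s8 (hK : QuasiGreedy e E K) (hE : Biorthogonal e E)
    {B : Finset ℕ} {b : ℕ → ℝ} {M : ℝ} (hM : 0 ≤ M) (hb : ∀ n ∈ B, |b n| ≤ M) :
    ‖∑ n ∈ B, b n • e n‖ ≤ 2 * K * M * ‖∑ n ∈ B, e n‖ := by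
  obtain ⟨r, hr, hle⟩ := exists_abs_eq_one_norm_sum_le e hM hb
  have hr' : ‖∑ n ∈ B, r n • e n‖ ≤ 2 * K * ‖∑ n ∈ B, e n‖ := by
    simpa using hK.norm_sum_mul_smul_le hE subset_rfl hr (s := 1) (by simp)
  nlinarith [mul_le_mul_of_nonneg_left hr' hM]

-- On a set `Γ` where `t ≤ |E n y|`, this cuts the coefficients of `y` down to modulus `t`.
noncomputable def truncate (e : ℕ → X) (E : ℕ → X →L[ℝ] ℝ) (Γ : Finset ℕ) (t : ℝ) (y : X) : X :=
  y - ∑ n ∈ Γ, (E n y - t * Real.sign (E n y)) • e n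

theorem Biorthogonal.apply_truncate (hE : Biorthogonal e E) (Γ : Finset ℕ) (t : ℝ) (y : X)
    (n : ℕ) : E n (truncate e E Γ t y) = if n ∈ Γ then t * Real.sign (E n y) else E n y := by
  simp only [truncate, map_sub, hE.apply_sum]
  split_ifs <;> ring

theorem Biorthogonal.abs_apply_truncate_le (hE : Biorthogonal e E) {U : Finset ℕ} {t : ℝ}
    (ht : 0 ≤ t) (y : X) {n : ℕ} (hn : n ∈ U) :
    |E n (truncate e E (U.filter fun m => t ≤ |E m y|) t y)| ≤ t := by
  rw [hE.apply_truncate]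
  split_ifs with hnΓ
  · rw [abs_mul, abs_of_nonneg ht]
    exact mul_le_of_le_one_right ht (Real.abs_sign_le_one _)
  · exact (not_le.1 fun h => hnΓ (mem_filter.2 ⟨hn, h⟩)).le

namespace QuasiGreedy

theorem norm_sum_sub_mul_sign_le (hK : QuasiGreedy e E K) (y : X) (Γ : Finset ℕ)
    {s : ℝ} (hΓ : GreedySet E y Γ) (hs0 : 0 ≤ s) (hs : ∀ n ∈ Γ, s ≤ |E n y|) :
    ‖∑ n ∈ Γ, (E n y - s * Real.sign (E n y)) • e n‖ ≤ K * ‖y‖ := by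
  induction Γ using Finset.strongInduction generalizing s with
  | H Γ ih =>
  rcases Γ.eq_empty_or_nonempty with rfl | hne
  · simpa using hK y ∅ hΓ
  have hP := hK y Γ hΓ
  rcases hs0.eq_or_lt with rfl | hs0
  · simpa using hP
  obtain ⟨r, hr, hmin⟩ := Γ.exists_min_image (fun n => |E n y|) hne
  have ha : 0 < |E r y| := hs0.trans_le (hs r hr)
  -- at level `|E r y|` the `r`-th term vanishes, so induction applies to `Γ.erase r`
  have htop : ‖∑ n ∈ Γ, (E n y - |E r y| * Real.sign (E n y)) • e n‖ ≤ K * ‖y‖ := by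
    rw [← sum_erase _ (by rw [Real.abs_mul_sign, sub_self, zero_smul])]
    exact ih _ (erase_ssubset hr) (hΓ.erase_of_forall_le hmin) (abs_nonneg _)
      fun n hn => hmin n (mem_of_mem_erase hn)
  set θ := s / |E r y|
  have hθ : θ * |E r y| = s := div_mul_cancel₀ s ha.ne'
  have hcomb : ∑ n ∈ Γ, (E n y - s * Real.sign (E n y)) • e n =
      (1 - θ) • ∑ n ∈ Γ, E n y • e n +
        θ • ∑ n ∈ Γ, (E n y - |E r y| * Real.sign (E n y)) • e n := by
    simp only [smul_sum, ← sum_add_distrib]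
    refine sum_congr rfl fun n _ => ?_
    rw [← hθ]
    module
  rw [hcomb, ← mem_closedBall_zero_iff]
  exact convex_closedBall _ _ (mem_closedBall_zero_iff.2 hP) (mem_closedBall_zero_iff.2 htop)
    (by linarith [(div_le_one ha).2 (hs r hr)]) (by positivity) (by ring)

theorem norm_truncate_le (hK : QuasiGreedy e E K) {y : X} {Γ : Finset ℕ} {t : ℝ}
    (hΓ : GreedySet E y Γ) (ht : 0 ≤ t) (hΓt : ∀ n ∈ Γ, t ≤ |E n y|) :
    ‖truncate e E Γ t y‖ ≤ (1 + K) * ‖y‖ := by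
  rw [truncate]
  linarith [norm_sub_le y (∑ n ∈ Γ, (E n y - t * Real.sign (E n y)) • e n),
    hK.norm_sum_sub_mul_sign_le y Γ hΓ ht hΓt]

theorem mul_norm_sum_le (hK : QuasiGreedy e E K) (hE : Biorthogonal e E) {y : X}
    {Γ S : Finset ℕ} {t : ℝ} (hΓ : GreedySet E y Γ) (ht : 0 ≤ t) (hΓt : ∀ n ∈ Γ, t ≤ |E n y|)
    (hS : S ⊆ Γ) : t * ‖∑ n ∈ S, e n‖ ≤ 4 * K ^ 2 * ‖y‖ := by
  have hK0 := hK.nonneg hE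
  rcases ht.eq_or_lt with rfl | ht
  · simp only [zero_mul]; positivity
  set g := ∑ n ∈ Γ, Real.sign (E n y) • e n
  have hsign : ∀ n ∈ Γ, |Real.sign (E n y)| = 1 := fun n hn =>
    Real.abs_sign_of_ne_zero (abs_pos.1 (ht.trans_le (hΓt n hn)))
  have hSg : ‖∑ n ∈ S, e n‖ ≤ 2 * K * ‖g‖ := by
    convert hK.norm_sum_mul_smul_le hE hS (fun n hn => hsign n (hS hn)) hsign using 3 with n hn
    rw [← abs_mul_abs_self (Real.sign (E n y)), hsign n (hS hn), one_mul, one_smul]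
  have hg : t * ‖g‖ ≤ 2 * K * ‖y‖ := by
    have htg : t • g = ∑ n ∈ Γ, E n y • e n - ∑ n ∈ Γ, (E n y - t * Real.sign (E n y)) • e n := by
      simp only [g, smul_sum, ← sum_sub_distrib, sub_smul, mul_smul, sub_sub_cancel]
    have := norm_sub_le (∑ n ∈ Γ, E n y • e n) (∑ n ∈ Γ, (E n y - t * Real.sign (E n y)) • e n)
    rw [← htg, norm_smul, Real.norm_of_nonneg ht.le] at this
    linarith [hK y Γ hΓ, hK.norm_sum_sub_mul_sign_le y Γ hΓ ht.le hΓt]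
  calc t * ‖∑ n ∈ S, e n‖ ≤ t * (2 * K * ‖g‖) := by gcongr
    _ = 2 * K * (t * ‖g‖) := by ring
    _ ≤ 2 * K * (2 * K * ‖y‖) := by gcongr
    _ = 4 * K ^ 2 * ‖y‖ := by ring

end QuasiGreedy

theorem Biorthogonal.sub_sum_apply_smul (hE : Biorthogonal e E) {Λ A : Finset ℕ} {v : X}
    (hv : v ∈ Submodule.span ℝ (e '' ↑(Λ ∪ A))) :
    v - ∑ n ∈ Λ, E n v • e n = ∑ n ∈ A \ Λ, E n v • e n := by
  rw [sub_eq_iff_eq_add, ← union_sdiff_left, sum_sdiff subset_union_left,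
    hE.sum_apply_smul_of_mem_span hv]

theorem QuasiGreedy.exists_norm_sub_sum_le (hK : QuasiGreedy e E K) (hE : Biorthogonal e E)
    {D : ℝ} (hD : 0 ≤ D) {x : X} {Λ A : Finset ℕ} {t : ℝ} (ht : 0 ≤ t)
    (hin : ∀ n ∈ Λ, t ≤ |E n x|) (hout : ∀ k ∉ Λ, |E k x| ≤ t)
    (hdem : ‖∑ n ∈ A \ Λ, e n‖ ≤ D * ‖∑ n ∈ Λ \ A, e n‖) (a : ℕ → ℝ) :
    ∃ d : ℕ → ℝ, ‖x - ∑ n ∈ Λ, d n • e n‖ ≤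
      (1 + K + 16 * K ^ 3 * D) * ‖x - ∑ n ∈ A, a n • e n‖ := by
  have hK0 := hK.nonneg hE
  set y := x - ∑ n ∈ A, a n • e n
  have hyx : ∀ k ∉ A, E k y = E k x := fun k hk => by simp [y, hE.apply_sum, hk]
  set Γ := (Λ ∪ A).filter fun n => t ≤ |E n y|
  have hΓ : GreedySet E y Γ := .filter_union hout hyx
  have hΓt : ∀ n ∈ Γ, t ≤ |E n y| := fun n hn => (mem_filter.1 hn).2
  have hΛA : Λ \ A ⊆ Γ := fun n hn => by
    obtain ⟨hnΛ, hnA⟩ := mem_sdiff.1 hn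
    exact mem_filter.2 ⟨mem_union_left _ hnΛ, hyx n hnA ▸ hin n hnΛ⟩
  set h := x - truncate e E Γ t y
  have hspan : h ∈ Submodule.span ℝ (e '' ↑(Λ ∪ A)) := by
    have hsub {S : Finset ℕ} (hS : S ⊆ Λ ∪ A) (c : ℕ → ℝ) :
        ∑ n ∈ S, c n • e n ∈ Submodule.span ℝ (e '' ↑(Λ ∪ A)) :=
      Submodule.sum_mem _ fun n hn => Submodule.smul_mem _ _
        (Submodule.subset_span (Set.mem_image_of_mem e (hS hn)))
    rw [show h = ∑ n ∈ A, a n • e n + ∑ n ∈ Γ, (E n y - t * Real.sign (E n y)) • e n by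
      simp only [h, truncate, y]; abel]
    exact add_mem (hsub subset_union_right a) (hsub (filter_subset _ _) _)
  have hcoeff : ∀ n ∈ A \ Λ, |E n h| ≤ 2 * t := fun n hn => by
    rw [map_sub]
    linarith [abs_sub (E n x) (E n (truncate e E Γ t y)), hout n (mem_sdiff.1 hn).2,
      hE.abs_apply_truncate_le ht y (mem_union_right Λ (mem_sdiff.1 hn).1)]
  refine ⟨fun n => E n h, ?_⟩
  calc ‖x - ∑ n ∈ Λ, E n h • e n‖
      = ‖truncate e E Γ t y + ∑ n ∈ A \ Λ, E n h • e n‖ := by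
        rw [← hE.sub_sum_apply_smul hspan, ← add_sub_assoc]
        simp only [h, add_sub_cancel]
    _ ≤ (1 + K) * ‖y‖ + 2 * K * (2 * t) * (D * ‖∑ n ∈ Λ \ A, e n‖) := by
        refine (norm_add_le _ _).trans (add_le_add (hK.norm_truncate_le hΓ ht hΓt) ?_)
        refine (hK.norm_sum_smul_le_of_abs_le_s8 hE (by positivity) hcoeff).trans ?_
        exact mul_le_mul_of_nonneg_left hdem (by positivity)
    _ = (1 + K) * ‖y‖ + 4 * K * D * (t * ‖∑ n ∈ Λ \ A, e n‖) := by ring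
    _ ≤ (1 + K) * ‖y‖ + 4 * K * D * (4 * K ^ 2 * ‖y‖) := by
        grw [hK.mul_norm_sum_le hE hΓ ht hΓt hΛA]
    _ = (1 + K + 16 * K ^ 3 * D) * ‖y‖ := by ring

theorem WDemocratic.one_le {w : ℕ → ℝ} {D : ℝ} (hD : WDemocratic w e D)
    (hE : Biorthogonal e E) : 1 ≤ D := by
  have h := hD {0} {0} le_rfl
  rw [sum_singleton] at h
  exact (le_mul_iff_one_le_left (norm_pos_iff.2 (hE.ne_zero 0))).1 h

theorem wsum_sdiff_le {w : ℕ → ℝ} {A Λ : Finset ℕ} (h : wsum w A ≤ wsum w Λ) :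
    wsum w (A \ Λ) ≤ wsum w (Λ \ A) := by
  have hA := sum_inter_add_sum_sdiff A Λ w
  have hΛ := sum_inter_add_sum_sdiff Λ A w
  rw [inter_comm] at hΛ
  unfold wsum at *
  linarith

theorem le_mul_sigmaW {w : ℕ → ℝ} {u r C : ℝ} {x : X} (hC : 0 < C) {A₀ : Finset ℕ}
    (hA₀ : wsum w A₀ ≤ u)
    (h : ∀ (A : Finset ℕ) (a : ℕ → ℝ), wsum w A ≤ u → r ≤ C * ‖x - ∑ n ∈ A, a n • e n‖) :
    r ≤ C * sigmaW w e u x := by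
  rw [← div_le_iff₀' hC]
  refine le_csInf ⟨_, A₀, 0, hA₀, rfl⟩ ?_
  rintro _ ⟨A, a, hA, rfl⟩
  exact (div_le_iff₀' hC).2 (h A a hA)

end

theorem stmt8_general {X : Type*} [NormedAddCommGroup X] [NormedSpace ℝ X]
    (e : ℕ → X) (E : ℕ → X →L[ℝ] ℝ) (w : ℕ → ℝ) (K D : ℝ)
    (hw : ∀ i, 0 < w i) (hb : NormalizedBasis e E)
    (hK : QuasiGreedy e E K) (hD : WDemocratic w e D) :
    WSemiGreedy w e E (1 + 3 * K + 16 * K ^ 3 * D) := by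
  have hE : Biorthogonal e E := hb.2.1
  have hK0 := hK.nonneg hE
  have hD0 : 0 ≤ D := zero_le_one.trans (hD.one_le hE)
  intro x Λ hΛ
  obtain ⟨c, hc⟩ := hE.exists_forall_norm_sub_sum_le x Λ
  refine ⟨c, le_mul_sigmaW (by positivity) le_rfl fun A a hA => ?_⟩
  rcases Λ.eq_empty_or_nonempty with rfl | hne
  · obtain rfl : A = ∅ := by
      by_contra hA'
      exact (sum_pos (fun i _ => hw i) (nonempty_iff_ne_empty.2 hA')).not_ge hA
    simp only [sum_empty, sub_zero]
    exact le_mul_of_one_le_left (norm_nonneg x) (by nlinarith [pow_nonneg hK0 3])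
  obtain ⟨t, ht, hin, hout⟩ := hΛ.exists_threshold hne
  obtain ⟨d, hd⟩ := hK.exists_norm_sub_sum_le hE hD0 ht hin hout (hD _ _ (wsum_sdiff_le hA)) a
  calc ‖x - ∑ n ∈ Λ, c n • e n‖ ≤ ‖x - ∑ n ∈ Λ, d n • e n‖ := hc d
    _ ≤ (1 + K + 16 * K ^ 3 * D) * ‖x - ∑ n ∈ A, a n • e n‖ := hd
    _ ≤ (1 + 3 * K + 16 * K ^ 3 * D) * ‖x - ∑ n ∈ A, a n • e n‖ := by gcongr; linarith

/-- every `w`-almost greedy basis is `w`-semi-greedy with constant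
`1 + 3K + 16K³D`, where `K` is a quasi-greedy constant and `D` a `w`-democracy constant. -/
theorem stmt8 {X : Type*} [NormedAddCommGroup X] [NormedSpace ℝ X] [CompleteSpace X]
    (e : ℕ → X) (E : ℕ → X →L[ℝ] ℝ) (w : ℕ → ℝ) (K D : ℝ)
    (hw : ∀ i, 0 < w i) (hb : NormalizedBasis e E)
    (hAG : ∃ K₀ : ℝ, WAlmostGreedy w e E K₀)
    (hK : QuasiGreedy e E K) (hD : WDemocratic w e D) :
    WSemiGreedy w e E (1 + 3 * K + 16 * K ^ 3 * D) :=
  stmt8_general e E w K D hw hb hK hD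
end

section
/- If (e_n) is w-semi-greedy with constant K̄ and basis constant β, and A is a finite set with w(A) ≤ limsup_n w_n, then max over signs of ||Σ_{n∈A} ± e_n|| ≤ 2βK̄. -/
open Finset Filter

/-!
Choose `N` beyond `A` and, since `w(A) ≤ limsup w`, two indices `k₁ < k₂` beyond `N` with
`w(A) ≤ w_{k₁} + w_{k₂}`. For `x = ∑_{n∈A} εₙ eₙ + e_{k₁} + e_{k₂}` the set `{k₁, k₂}` is greedy,
and removing `∑_{n∈A} εₙ eₙ` from `x` shows `σ^w(x) ≤ 2`. So the Chebyshev residual `y` on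
`{k₁, k₂}` has `‖y‖ ≤ 2K̄`, while its `N`-th partial sum is `∑_{n∈A} εₙ eₙ`; hence the bound `2βK̄`.
-/

lemma exists_pair_le_add_of_le_limsup {w : ℕ → ℝ} (hw : ∀ i, 0 ≤ w i) {u : ℝ}
    (hu : u ≤ limsup w atTop) (N : ℕ) : ∃ k₁ k₂, N ≤ k₁ ∧ k₁ < k₂ ∧ u ≤ w k₁ + w k₂ := by
  by_cases hu0 : u ≤ 0
  · exact ⟨N, N + 1, le_rfl, N.lt_succ_self, by linarith [hw N, hw (N + 1)]⟩
  have hfreq : ∃ᶠ n in atTop, u / 2 < w n :=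
    frequently_lt_of_lt_limsup (isCoboundedUnder_le_of_le atTop hw) (by linarith)
  rw [frequently_atTop] at hfreq
  obtain ⟨k₁, hk₁, hw₁⟩ := hfreq N
  obtain ⟨k₂, hk₂, hw₂⟩ := hfreq (k₁ + 1)
  exact ⟨k₁, k₂, hk₁, hk₂, by linarith⟩

section Basis

variable {X : Type*} [NormedAddCommGroup X] [NormedSpace ℝ X] {e : ℕ → X} {E : ℕ → X →L[ℝ] ℝ}
  {w : ℕ → ℝ}

lemma ne_zero_of_biorthogonal (hbio : ∀ n m, E n (e m) = if n = m then (1 : ℝ) else 0) (n : ℕ) :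
    e n ≠ 0 := by
  intro h
  simpa [h] using hbio n n

lemma coeff_sum_smul (hbio : ∀ n m, E n (e m) = if n = m then (1 : ℝ) else 0)
    (A : Finset ℕ) (a : ℕ → ℝ) (n : ℕ) :
    E n (∑ m ∈ A, a m • e m) = if n ∈ A then a n else 0 := by
  simp [map_sum, hbio]

lemma coeff_sum (hbio : ∀ n m, E n (e m) = if n = m then (1 : ℝ) else 0) (B : Finset ℕ) (n : ℕ) :
    E n (∑ m ∈ B, e m) = if n ∈ B then 1 else 0 := by
  simpa using coeff_sum_smul hbio B 1 n

lemma BasisConstBound.nonneg {β : ℝ} (hβ : BasisConstBound e E β) {x : X} (hx : x ≠ 0) :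
    0 ≤ β := by
  have h := hβ x 0
  rw [range_zero, sum_empty, norm_zero] at h
  exact (mul_nonneg_iff_of_pos_right (norm_pos_iff.2 hx)).1 h

lemma BasisConstBound.norm_sum_smul_le {β : ℝ} (hβ : BasisConstBound e E β) {A : Finset ℕ}
    {N : ℕ} (hAN : ∀ a ∈ A, a < N) {a : ℕ → ℝ} {y : X}
    (hy : ∀ n < N, E n y = if n ∈ A then a n else 0) :
    ‖∑ n ∈ A, a n • e n‖ ≤ β * ‖y‖ := by
  have hsub : A ⊆ range N := fun n hn => mem_range.2 (hAN n hn)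
  have hproj : ∑ n ∈ range N, E n y • e n = ∑ n ∈ A, a n • e n := by
    rw [sum_congr rfl fun n hn => by rw [hy n (mem_range.1 hn)]]
    simp only [ite_smul, zero_smul]
    rw [← sum_filter, filter_mem_eq_inter, inter_eq_right.2 hsub]
  exact hproj ▸ hβ y N

lemma sigmaW_nonneg (u : ℝ) (x : X) : 0 ≤ sigmaW w e u x :=
  Real.sInf_nonneg (by rintro r ⟨A, c, -, rfl⟩; exact norm_nonneg _)

lemma sigmaW_le {u : ℝ} (x : X) {A : Finset ℕ} (hA : wsum w A ≤ u) (a : ℕ → ℝ) :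
    sigmaW w e u x ≤ ‖x - ∑ n ∈ A, a n • e n‖ :=
  csInf_le ⟨0, by rintro r ⟨A, c, -, rfl⟩; exact norm_nonneg _⟩ ⟨A, a, hA, rfl⟩

lemma WSemiGreedy.nonneg {K : ℝ} (h : WSemiGreedy w e E K) {x : X} (hx : x ≠ 0) : 0 ≤ K := by
  obtain ⟨c, hc⟩ := h x ∅ (by simp [GreedySet])
  rw [sum_empty, sub_zero] at hc
  by_contra hK
  have hσ := sigmaW_nonneg (w := w) (e := e) (wsum w ∅) x
  nlinarith [norm_pos_iff.2 hx]

lemma WSemiGreedy.exists_le {K : ℝ} (h : WSemiGreedy w e E K) (hK : 0 ≤ K) {x : X}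
    {Λ A : Finset ℕ} (hΛ : GreedySet E x Λ) (hA : wsum w A ≤ wsum w Λ) (a : ℕ → ℝ) :
    ∃ c : ℕ → ℝ, ‖x - ∑ n ∈ Λ, c n • e n‖ ≤ K * ‖x - ∑ n ∈ A, a n • e n‖ := by
  obtain ⟨c, hc⟩ := h x Λ hΛ
  exact ⟨c, hc.trans (mul_le_mul_of_nonneg_left (sigmaW_le x hA a) hK)⟩

lemma greedySet_sum_sign_add_sum (hbio : ∀ n m, E n (e m) = if n = m then (1 : ℝ) else 0)
    {A B : Finset ℕ} (hAB : Disjoint A B) {ε : ℕ → ℝ} (hε : SignVec ε) :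
    GreedySet E (∑ n ∈ A, ε n • e n + ∑ n ∈ B, e n) B := by
  intro n hn k hk
  rw [map_add, map_add, coeff_sum_smul hbio, coeff_sum_smul hbio, coeff_sum hbio, coeff_sum hbio,
    if_pos hn, if_neg (disjoint_right.1 hAB hn), if_neg hk]
  split_ifs
  · rcases hε k with h | h <;> simp [h]
  · simp

lemma WSemiGreedy.norm_sum_sign_le {β K : ℝ}
    (hbio : ∀ n m, E n (e m) = if n = m then (1 : ℝ) else 0)
    (hβ : BasisConstBound e E β) (h : WSemiGreedy w e E K) {A B : Finset ℕ} {N : ℕ}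
    (hAN : ∀ a ∈ A, a < N) (hBN : ∀ b ∈ B, N ≤ b) (hAB : wsum w A ≤ wsum w B)
    {ε : ℕ → ℝ} (hε : SignVec ε) :
    ‖∑ n ∈ A, ε n • e n‖ ≤ β * K * ‖∑ n ∈ B, e n‖ := by
  have hdisj : Disjoint A B :=
    disjoint_left.2 fun n hA hB => (hBN n hB).not_gt (hAN n hA)
  set x := ∑ n ∈ A, ε n • e n + ∑ n ∈ B, e n
  obtain ⟨c, hc⟩ := h.exists_le (h.nonneg (ne_zero_of_biorthogonal hbio 0))
    (greedySet_sum_sign_add_sum hbio hdisj hε) hAB ε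
  rw [add_sub_cancel_left] at hc
  have hy : ∀ n < N, E n (x - ∑ m ∈ B, c m • e m) = if n ∈ A then ε n else 0 := by
    intro n hn
    have hnB : n ∉ B := fun hB => (hBN n hB).not_gt hn
    rw [map_sub, map_add, coeff_sum_smul hbio, coeff_sum hbio, coeff_sum_smul hbio, if_neg hnB,
      if_neg hnB]
    ring
  calc ‖∑ n ∈ A, ε n • e n‖ ≤ β * ‖x - ∑ m ∈ B, c m • e m‖ := hβ.norm_sum_smul_le hAN hy
    _ ≤ β * (K * ‖∑ n ∈ B, e n‖) :=
        mul_le_mul_of_nonneg_left hc (hβ.nonneg (ne_zero_of_biorthogonal hbio 0))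
    _ = β * K * ‖∑ n ∈ B, e n‖ := (mul_assoc _ _ _).symm

end Basis

theorem stmt9_general {X : Type*} [NormedAddCommGroup X] [NormedSpace ℝ X]
    (e : ℕ → X) (E : ℕ → X →L[ℝ] ℝ) (w : ℕ → ℝ) (K β : ℝ)
    (hw : ∀ i, 0 < w i) (hb : NormalizedBasis e E)
    (hβ : BasisConstBound e E β) (h : WSemiGreedy w e E K)
    (A : Finset ℕ) (hA : wsum w A ≤ Filter.limsup w Filter.atTop)
    (ε : ℕ → ℝ) (hε : SignVec ε) :
    ‖∑ n ∈ A, ε n • e n‖ ≤ 2 * β * K := by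
  obtain ⟨hnorm, hbio, -⟩ := hb
  set N := A.sup id + 1
  obtain ⟨k₁, k₂, hk₁, hk₁₂, hwk⟩ := exists_pair_le_add_of_le_limsup (fun i => (hw i).le) hA N
  have hAN : ∀ a ∈ A, a < N := fun a ha => Nat.lt_succ_of_le (le_sup (f := id) ha)
  have hBN : ∀ b ∈ ({k₁, k₂} : Finset ℕ), N ≤ b := by
    simp only [mem_insert, mem_singleton]
    omega
  have hpair : ‖∑ n ∈ {k₁, k₂}, e n‖ ≤ 2 := by
    rw [sum_pair hk₁₂.ne]
    linarith [norm_add_le (e k₁) (e k₂), hnorm k₁, hnorm k₂]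
  have hβK : 0 ≤ β * K := mul_nonneg (hβ.nonneg (ne_zero_of_biorthogonal hbio 0))
    (h.nonneg (ne_zero_of_biorthogonal hbio 0))
  calc ‖∑ n ∈ A, ε n • e n‖ ≤ β * K * ‖∑ n ∈ {k₁, k₂}, e n‖ :=
        h.norm_sum_sign_le hbio hβ hAN hBN (hwk.trans_eq (sum_pair hk₁₂.ne).symm) hε
    _ ≤ β * K * 2 := mul_le_mul_of_nonneg_left hpair hβK
    _ = 2 * β * K := by ring

/-- if the basis is `w`-semi-greedy with constant `K` and basis constant `β`,
and `w(A) ≤ limsup wₙ`, then `‖∑_{n∈A} ± eₙ‖ ≤ 2βK` for every choice of signs. -/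
theorem stmt9 {X : Type*} [NormedAddCommGroup X] [NormedSpace ℝ X] [CompleteSpace X]
    (e : ℕ → X) (E : ℕ → X →L[ℝ] ℝ) (w : ℕ → ℝ) (K β : ℝ)
    (hw : ∀ i, 0 < w i) (hb : NormalizedBasis e E)
    (hβ : BasisConstBound e E β) (h : WSemiGreedy w e E K)
    (A : Finset ℕ) (hA : wsum w A ≤ Filter.limsup w Filter.atTop)
    (ε : ℕ → ℝ) (hε : SignVec ε) :
    ‖∑ n ∈ A, ε n • e n‖ ≤ 2 * β * K :=
  stmt9_general e E w K β hw hb hβ h A hA ε hε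
end

section
/- Suppose 0 < inf_n w_n ≤ sup_n w_n < ∞. Then a basis (e_n) is w-superdemocratic if and only if it is superdemocratic (for the constant weight). -/
open Finset Filter

/-! Superdemocracy transfers between any two weights that are bounded above and away from zero.
Given `v(A) ≤ v(B)`, split `A` into pieces of at most `m = ⌊w(B) / C⌋` elements, `C` an upper
bound of `w`: each piece has `w`-weight at most `w(B)`, and since both weights are comparable to
the counting measure, the number of pieces is bounded independently of `A` and `B`. When `B` is
too small for `m ≥ 1`, use singletons instead: `‖eₙ‖ = 1 ≤ D ‖∑_B δₙ eₙ‖`. -/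

lemma SignVec.abs_eq_one {ε : ℕ → ℝ} (hε : SignVec ε) (n : ℕ) : |ε n| = 1 := by
  rcases hε n with h | h <;> simp [h]

lemma wsum_le_mul_card {w : ℕ → ℝ} {C : ℝ} (h : ∀ n, w n ≤ C) (A : Finset ℕ) :
    wsum w A ≤ C * A.card := by
  simpa [wsum, mul_comm] using Finset.sum_le_sum fun i (_ : i ∈ A) => h i

lemma mul_card_le_wsum {w : ℕ → ℝ} {c : ℝ} (h : ∀ n, c ≤ w n) (A : Finset ℕ) :
    c * A.card ≤ wsum w A := by
  simpa [wsum, mul_comm] using Finset.sum_le_sum fun i (_ : i ∈ A) => h i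

lemma mul_card_le_mul_card_of_wsum_le {v : ℕ → ℝ} {c C : ℝ} (hc : ∀ n, c ≤ v n)
    (hC : ∀ n, v n ≤ C) {A B : Finset ℕ} (hAB : wsum v A ≤ wsum v B) :
    c * A.card ≤ C * B.card :=
  (mul_card_le_wsum hc A).trans (hAB.trans (wsum_le_mul_card hC B))

lemma lt_two_mul_max_one_floor (x : ℝ) : x < 2 * (max 1 ⌊x⌋₊ : ℕ) := by
  have h1 : (1 : ℝ) ≤ (max 1 ⌊x⌋₊ : ℕ) := by exact_mod_cast le_max_left _ _
  have h2 : (⌊x⌋₊ : ℝ) ≤ (max 1 ⌊x⌋₊ : ℕ) := by exact_mod_cast le_max_right _ _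
  linarith [Nat.lt_floor_add_one x]

lemma norm_sum_le_of_forall_card_le {X : Type*} [NormedAddCommGroup X] (f : ℕ → X) {m : ℕ}
    (hm : 0 < m) {M : ℝ} (A : Finset ℕ) (h : ∀ S ⊆ A, S.card ≤ m → ‖∑ n ∈ S, f n‖ ≤ M) :
    ‖∑ n ∈ A, f n‖ ≤ (A.card / m + 1) * M := by
  have hM : 0 ≤ M := by simpa using h ∅ (Finset.empty_subset A) (Nat.zero_le m)
  have hm' : (0 : ℝ) < m := by exact_mod_cast hm
  induction A using Finset.strongInduction with
  | H A ih =>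
    by_cases hA : A.card ≤ m
    · calc ‖∑ n ∈ A, f n‖ ≤ M := h A subset_rfl hA
        _ ≤ (A.card / m + 1) * M :=
            le_mul_of_one_le_left hM (le_add_of_nonneg_left (by positivity))
    obtain ⟨S, hSA, hS⟩ := Finset.exists_subset_card_eq (not_le.1 hA).le
    have hrest := ih (A \ S) (Finset.sdiff_ssubset hSA (Finset.card_pos.1 (hS ▸ hm)))
      fun T hT => h T (hT.trans Finset.sdiff_subset)
    have hcard : ((A \ S).card : ℝ) = A.card - m := by
      rw [Finset.card_sdiff_of_subset hSA, hS, Nat.cast_sub (not_le.1 hA).le]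
    calc ‖∑ n ∈ A, f n‖ = ‖∑ n ∈ S, f n + ∑ n ∈ A \ S, f n‖ := by
          rw [add_comm, Finset.sum_sdiff hSA]
      _ ≤ M + ((A \ S).card / m + 1) * M :=
          (norm_add_le _ _).trans (add_le_add (h S hSA hS.le) hrest)
      _ = (A.card / m + 1) * M := by rw [hcard]; field_simp; ring

section

variable {X : Type*} [NormedAddCommGroup X] [NormedSpace ℝ X]

lemma norm_sum_sign_smul_le_card {e : ℕ → X} (he : ∀ n, ‖e n‖ = 1) {ε : ℕ → ℝ}
    (hε : SignVec ε) (A : Finset ℕ) : ‖∑ n ∈ A, ε n • e n‖ ≤ A.card := by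
  calc ‖∑ n ∈ A, ε n • e n‖ ≤ ∑ n ∈ A, ‖ε n • e n‖ := norm_sum_le _ _
    _ = A.card := by simp [norm_smul, he, hε.abs_eq_one]

lemma one_le_of_wSuperDemocratic {e : ℕ → X} (he : ∀ n, ‖e n‖ = 1) {w : ℕ → ℝ}
    (hw : ∀ n, 0 ≤ w n) {D : ℝ} (hD : WSuperDemocratic w e D) {B : Finset ℕ} {b : ℕ}
    (hb : b ∈ B) {δ : ℕ → ℝ} (hδ : SignVec δ) : 1 ≤ D * ‖∑ n ∈ B, δ n • e n‖ := by
  have hwb : wsum w {b} ≤ wsum w B := by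
    simpa [wsum] using Finset.single_le_sum (fun i _ => hw i) hb
  simpa [he] using hD {b} B hwb (fun _ => 1) δ (fun _ => Or.inl rfl) hδ

theorem WSuperDemocratic.of_weight_bounds {e : ℕ → X} (he : ∀ n, ‖e n‖ = 1)
    {w v : ℕ → ℝ} {c C c' C' D : ℝ} (hc : 0 < c) (hcw : ∀ n, c ≤ w n) (hwC : ∀ n, w n ≤ C)
    (hc' : 0 < c') (hcv : ∀ n, c' ≤ v n) (hvC : ∀ n, v n ≤ C')
    (hD : WSuperDemocratic w e D) :
    WSuperDemocratic v e ((2 * C * C' / (c * c') + 1) * D) := by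
  intro A B hAB ε δ hε hδ
  have hC : 0 < C := hc.trans_le ((hcw 0).trans (hwC 0))
  have hAB' := mul_card_le_mul_card_of_wsum_le hcv hvC hAB
  rcases B.eq_empty_or_nonempty with rfl | ⟨b, hb⟩
  · have hA : (A.card : ℝ) ≤ 0 := nonpos_of_mul_nonpos_right (by simpa using hAB') hc'
    simp [Finset.card_eq_zero.1 (by exact_mod_cast hA.antisymm (Nat.cast_nonneg _))]
  have hM := one_le_of_wSuperDemocratic he (fun n => hc.le.trans (hcw n)) hD hb hδ
  set M := D * ‖∑ n ∈ B, δ n • e n‖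
  have hwB : 0 ≤ wsum w B / C :=
    div_nonneg ((mul_card_le_wsum hcw B).trans' (by positivity)) hC.le
  set m := max 1 ⌊wsum w B / C⌋₊
  have hm : (0 : ℝ) < m := by positivity
  have hpieces : ∀ S ⊆ A, S.card ≤ m → ‖∑ n ∈ S, ε n • e n‖ ≤ M := by
    intro S _ hS
    rcases le_max_iff.1 hS with hS1 | hSfloor
    · exact (norm_sum_sign_smul_le_card he hε S).trans (le_trans (by exact_mod_cast hS1) hM)
    refine hD S B ?_ ε δ hε hδ
    calc wsum w S ≤ C * S.card := wsum_le_mul_card hwC S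
      _ ≤ C * ⌊wsum w B / C⌋₊ := by gcongr
      _ ≤ wsum w B := by rw [mul_comm, ← le_div_iff₀ hC]; exact Nat.floor_le hwB
  have hcount : (A.card : ℝ) / m ≤ 2 * C * C' / (c * c') := by
    have hC' : 0 ≤ C' := (hc'.trans_le (hcv 0)).le.trans (hvC 0)
    have hwBm : wsum w B < 2 * m * C := (div_lt_iff₀ hC).1 (lt_two_mul_max_one_floor _)
    rw [div_le_div_iff₀ hm (by positivity)]
    calc A.card * (c * c') = c * (c' * A.card) := by ring
      _ ≤ c * (C' * B.card) := by gcongr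
      _ = C' * (c * B.card) := by ring
      _ ≤ C' * wsum w B := by gcongr; exact mul_card_le_wsum hcw B
      _ ≤ C' * (2 * m * C) := by gcongr
      _ = 2 * C * C' * m := by ring
  calc ‖∑ n ∈ A, ε n • e n‖ ≤ (A.card / m + 1) * M :=
        norm_sum_le_of_forall_card_le _ (by exact_mod_cast hm) A hpieces
    _ ≤ (2 * C * C' / (c * c') + 1) * M := by gcongr
    _ = _ := (mul_assoc _ _ _).symm

end

theorem stmt13_general {X : Type*} [NormedAddCommGroup X] [NormedSpace ℝ X]
    (e : ℕ → X) (E : ℕ → X →L[ℝ] ℝ) (w : ℕ → ℝ)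
    (hb : NormalizedBasis e E)
    (hlb : ∃ c : ℝ, 0 < c ∧ ∀ n, c ≤ w n) (hub : ∃ C : ℝ, ∀ n, w n ≤ C) :
    (∃ D : ℝ, WSuperDemocratic w e D) ↔
      (∃ C : ℝ, WSuperDemocratic (fun _ => (1:ℝ)) e C) := by
  obtain ⟨c, hc, hcw⟩ := hlb
  obtain ⟨C, hwC⟩ := hub
  have hone : ∀ _ : ℕ, (1 : ℝ) ≤ 1 := fun _ => le_rfl
  constructor
  · rintro ⟨D, hD⟩
    exact ⟨_, hD.of_weight_bounds hb.1 hc hcw hwC one_pos hone hone⟩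
  · rintro ⟨D, hD⟩
    exact ⟨_, hD.of_weight_bounds hb.1 one_pos hone hone hc hcw hwC⟩

/-- if `0 < inf wₙ ≤ sup wₙ < ∞`, then `w`-superdemocratic is equivalent
to superdemocratic (the constant weight). -/
theorem stmt13 {X : Type*} [NormedAddCommGroup X] [NormedSpace ℝ X] [CompleteSpace X]
    (e : ℕ → X) (E : ℕ → X →L[ℝ] ℝ) (w : ℕ → ℝ)
    (hb : NormalizedBasis e E)
    (hlb : ∃ c : ℝ, 0 < c ∧ ∀ n, c ≤ w n) (hub : ∃ C : ℝ, ∀ n, w n ≤ C) :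
    (∃ D : ℝ, WSuperDemocratic w e D) ↔
      (∃ C : ℝ, WSuperDemocratic (fun _ => (1:ℝ)) e C) :=
  stmt13_general e E w hb hlb hub
end
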